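/- arXiv:1604.06197 — 11 statements merged into one kernel-verified Lean document; each statement's English description precedes it below -/
import Mathlib

section
/- Let U be a finite set of vectors in ℝ³ that contains two nonzero orthogonal vectors u and v. Then there exists an orthogonal linear map Q of ℝ³ with Qw ≥ 0 for every w ∈ U if and only if there exists such an orthogonal map Q for which, in addition, Qu or Qv is a nonnegative scalar multiple of one of the standard basis vectors e₁, e₂, e₃. -/
/-!
Every admissible `Q` already has the required form. `Qu` and `Qv` are nonzero, nonnegative and
orthogonal, so their supports are disjoint and nonempty; in dimension three one of the two
supports must then be a single coordinate, i.e. `Qu` or `Qv` is a nonnegative multiple of a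
standard basis vector.
-/

open Matrix Finset

namespace Matrix

variable {n R : Type*} [Fintype n] [CommRing R]

theorem mulVec_injective_of_mem_orthogonalGroup [DecidableEq n] {Q : Matrix n n R}
    (hQ : Q ∈ orthogonalGroup n R) : Function.Injective Q.mulVec :=
  Function.LeftInverse.injective (g := Qᵀ.mulVec) fun x => by
    rw [mulVec_mulVec, (mem_orthogonalGroup_iff' n R).mp hQ, one_mulVec]

theorem dotProduct_mulVec_mulVec_of_mem_orthogonalGroup [DecidableEq n] {Q : Matrix n n R}
    (hQ : Q ∈ orthogonalGroup n R) (x y : n → R) : Q *ᵥ x ⬝ᵥ Q *ᵥ y = x ⬝ᵥ y := by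
  rw [dotProduct_mulVec, ← mulVec_transpose, mulVec_mulVec,
    (mem_orthogonalGroup_iff' n R).mp hQ, one_mulVec]

end Matrix

theorem eq_zero_or_eq_zero_of_dotProduct_eq_zero_of_nonneg {ι R : Type*} [Fintype ι]
    [Semiring R] [PartialOrder R] [IsOrderedRing R] [NoZeroDivisors R] {a b : ι → R}
    (ha : 0 ≤ a) (hb : 0 ≤ b) (hab : a ⬝ᵥ b = 0) (i : ι) : a i = 0 ∨ b i = 0 :=
  mul_eq_zero.mp <| congr_fun
    ((Fintype.sum_eq_zero_iff_of_nonneg fun j => mul_nonneg (ha j) (hb j)).mp hab) i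

section Support

variable {ι M : Type*} [Fintype ι] [DecidableEq ι] [Zero M] [DecidableEq M]

theorem exists_eq_single_of_card_support_le_one {a : ι → M} (ha : a ≠ 0)
    (hcard : #{i | a i ≠ 0} ≤ 1) : ∃ i, a = Pi.single i (a i) := by
  obtain ⟨i, hi⟩ := Function.ne_iff.mp ha
  refine ⟨i, funext fun j => ?_⟩
  rcases eq_or_ne j i with rfl | hji
  · simp
  · rw [Pi.single_eq_of_ne hji]
    by_contra hj
    exact hji (card_le_one.mp hcard j (by simpa using hj) i (by simpa using hi))

theorem exists_eq_single_of_disjoint_support (hι : Fintype.card ι ≤ 3) {a b : ι → M}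
    (ha : a ≠ 0) (hb : b ≠ 0) (hab : ∀ i, a i = 0 ∨ b i = 0) :
    (∃ i, a = Pi.single i (a i)) ∨ ∃ i, b = Pi.single i (b i) := by
  have hdisj : Disjoint (univ.filter (a · ≠ 0)) (univ.filter (b · ≠ 0)) :=
    disjoint_filter.mpr fun i _ hai hbi => (hab i).elim hai hbi
  have hsum : #{i | a i ≠ 0} + #{i | b i ≠ 0} ≤ 3 :=
    (card_union_of_disjoint hdisj).symm.le.trans ((card_le_univ _).trans hι)
  by_cases hcard : #{i | a i ≠ 0} ≤ 1
  · exact .inl (exists_eq_single_of_card_support_le_one ha hcard)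
  · exact .inr (exists_eq_single_of_card_support_le_one hb (by omega))

end Support

theorem finiteness_condition_I
    (U : Finset (Fin 3 → ℝ)) (u v : Fin 3 → ℝ)
    (hu : u ∈ U) (hv : v ∈ U) (hu0 : u ≠ 0) (hv0 : v ≠ 0)
    (horth : u ⬝ᵥ v = 0) :
    (∃ Q ∈ Matrix.orthogonalGroup (Fin 3) ℝ, ∀ w ∈ U, 0 ≤ Q.mulVec w) ↔
    (∃ Q ∈ Matrix.orthogonalGroup (Fin 3) ℝ, (∀ w ∈ U, 0 ≤ Q.mulVec w) ∧
      ∃ (i : Fin 3) (c : ℝ), 0 ≤ c ∧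
        (Q.mulVec u = c • (Pi.single i 1 : Fin 3 → ℝ) ∨ Q.mulVec v = c • (Pi.single i 1 : Fin 3 → ℝ))) := by
  refine ⟨fun ⟨Q, hQ, hpos⟩ => ⟨Q, hQ, hpos, ?_⟩, fun ⟨Q, hQ, hpos, _⟩ => ⟨Q, hQ, hpos⟩⟩
  have hinj := mulVec_injective_of_mem_orthogonalGroup hQ
  have hQu0 : Q *ᵥ u ≠ 0 := fun h => hu0 (hinj (h.trans (mulVec_zero Q).symm))
  have hQv0 : Q *ᵥ v ≠ 0 := fun h => hv0 (hinj (h.trans (mulVec_zero Q).symm))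
  have hQorth : Q *ᵥ u ⬝ᵥ Q *ᵥ v = 0 := by
    rw [dotProduct_mulVec_mulVec_of_mem_orthogonalGroup hQ, horth]
  have hsingle (w : Fin 3 → ℝ) (i : Fin 3) (h : Q *ᵥ w = Pi.single i ((Q *ᵥ w) i)) :
      Q *ᵥ w = (Q *ᵥ w) i • Pi.single i 1 := by
    rw [← Pi.single_smul, smul_eq_mul, mul_one, ← h]
  rcases exists_eq_single_of_disjoint_support (Fintype.card_fin 3).le hQu0 hQv0
      (eq_zero_or_eq_zero_of_dotProduct_eq_zero_of_nonneg (hpos u hu) (hpos v hv) hQorth) with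
    ⟨i, hi⟩ | ⟨i, hi⟩
  · exact ⟨i, _, hpos u hu i, .inl (hsingle u i hi)⟩
  · exact ⟨i, _, hpos v hv i, .inr (hsingle v i hi)⟩
end

section
/- Let U = {u₁, …, u_p} be a finite set of vectors in ℝ³. Then U is isometrically embeddable into ℝ³≥0 if and only if there exists a unit vector g ∈ ℝ³ such that for all i, j ∈ {1, …, p} one has ⟨u_i, u_j⟩ ≥ ⟨g, u_i⟩·⟨g, u_j⟩ ≥ 0. -/
/-!
Replacing `g` by `-g` we may assume `⟨g, u i⟩ ≥ 0` for all `i`. The projections `w i` of the `u i`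
onto the plane `g⊥` then have pairwise nonnegative inner products, so they all lie in a closed
quarter-plane: starting from the clockwise-most `w m`, every `w i` is at most a right angle further
counterclockwise. With `a := w m / ‖w m‖`, the orthonormal frame `a, g × a, g` has nonnegative
inner products with every `u i`, and its rows form the required orthogonal matrix. Conversely, the
last row of such a matrix is a suitable `g`, since `⟨u i, u j⟩ = ⟨Q u i, Q u j⟩` is a sum of three
nonnegative products.
-/

open Matrix

section Orthogonal

variable {n R : Type*} [Fintype n] [DecidableEq n] [CommRing R]

theorem Matrix.mulVec_dotProduct_mulVec_of_mem_orthogonalGroup {Q : Matrix n n R}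
    (hQ : Q ∈ orthogonalGroup n R) (x y : n → R) : Q *ᵥ x ⬝ᵥ Q *ᵥ y = x ⬝ᵥ y := by
  rw [dotProduct_mulVec, vecMul_mulVec, (mem_orthogonalGroup_iff' n R).mp hQ, vecMul_one]

theorem Matrix.mem_orthogonalGroup_iff_dotProduct {Q : Matrix n n R} :
    Q ∈ orthogonalGroup n R ↔ ∀ i j, Q i ⬝ᵥ Q j = (1 : Matrix n n R) i j := by
  rw [mem_orthogonalGroup_iff, ← Matrix.ext_iff]
  rfl

end Orthogonal

theorem Matrix.apply_mul_apply_le_dotProduct {n R : Type*} [Fintype n] [Semiring R]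
    [PartialOrder R] [IsOrderedRing R] {x y : n → R} (hx : 0 ≤ x) (hy : 0 ≤ y) (k : n) :
    x k * y k ≤ x ⬝ᵥ y :=
  Finset.single_le_sum (fun i _ => mul_nonneg (hx i) (hy i)) (Finset.mem_univ k)

theorem row_unit_normal_of_mulVec_nonneg {n ι : Type*} [Fintype n] [DecidableEq n]
    {Q : Matrix n n ℝ} (hQ : Q ∈ orthogonalGroup n ℝ) {u : ι → n → ℝ}
    (hu : ∀ i, 0 ≤ Q *ᵥ u i) (k : n) :
    Q k ⬝ᵥ Q k = 1 ∧
      ∀ i j, (Q k ⬝ᵥ u i) * (Q k ⬝ᵥ u j) ≤ u i ⬝ᵥ u j ∧ 0 ≤ (Q k ⬝ᵥ u i) * (Q k ⬝ᵥ u j) := by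
  refine ⟨by simpa using mem_orthogonalGroup_iff_dotProduct.mp hQ k k,
    fun i j => ⟨?_, mul_nonneg (hu i k) (hu j k)⟩⟩
  exact (apply_mul_apply_le_dotProduct (hu i) (hu j) k).trans_eq
    (mulVec_dotProduct_mulVec_of_mem_orthogonalGroup hQ _ _)

theorem forall_nonneg_or_forall_nonpos_of_mul_nonneg {ι R : Type*} [Ring R] [LinearOrder R]
    [IsStrictOrderedRing R] {f : ι → R} (h : ∀ i j, 0 ≤ f i * f j) :
    (∀ i, 0 ≤ f i) ∨ ∀ i, f i ≤ 0 := by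
  by_contra! ⟨⟨i, hi⟩, ⟨j, hj⟩⟩
  exact (mul_neg_of_neg_of_pos hi hj).not_ge (h i j)

theorem Finset.exists_forall_rel_of_total_of_trans {α : Type*} {r : α → α → Prop} {s : Finset α}
    (hs : s.Nonempty) (total : ∀ a ∈ s, ∀ b ∈ s, r a b ∨ r b a)
    (trans : ∀ a ∈ s, ∀ b ∈ s, ∀ c ∈ s, r a b → r b c → r a c) :
    ∃ m ∈ s, ∀ i ∈ s, r m i := by
  induction hs using Finset.Nonempty.cons_induction with
  | singleton a =>
    refine ⟨a, mem_singleton_self a, fun i hi => ?_⟩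
    rw [mem_singleton.mp hi]
    simpa using total a (mem_singleton_self a) a (mem_singleton_self a)
  | cons a t _ _ ih =>
    obtain ⟨m, hm, hmin⟩ := ih
      (fun a ha b hb => total a (mem_cons_of_mem ha) b (mem_cons_of_mem hb))
      (fun a ha b hb c hc =>
        trans a (mem_cons_of_mem ha) b (mem_cons_of_mem hb) c (mem_cons_of_mem hc))
    rcases total a (mem_cons_self a t) m (mem_cons_of_mem hm) with ham | hma
    · refine ⟨a, mem_cons_self a t, fun i hi => ?_⟩
      rcases mem_cons.mp hi with rfl | hi
      · simpa using total i (mem_cons_self i t) i (mem_cons_self i t)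
      · exact trans a (mem_cons_self a t) m (mem_cons_of_mem hm) i (mem_cons_of_mem hi) ham
          (hmin i hi)
    · refine ⟨m, mem_cons_of_mem hm, fun i hi => ?_⟩
      rcases mem_cons.mp hi with rfl | hi
      · exact hma
      · exact hmin i hi

section Projection

variable {n R : Type*} [Fintype n] [CommRing R] {g : n → R}

theorem dotProduct_sub_smul_self (hg : g ⬝ᵥ g = 1) (u : n → R) :
    g ⬝ᵥ (u - (g ⬝ᵥ u) • g) = 0 := by
  simp [dotProduct_sub, hg]

theorem sub_smul_dotProduct_sub_smul (hg : g ⬝ᵥ g = 1) (u v : n → R) :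
    (u - (g ⬝ᵥ u) • g) ⬝ᵥ (v - (g ⬝ᵥ v) • g) = u ⬝ᵥ v - (g ⬝ᵥ u) * (g ⬝ᵥ v) := by
  simp only [dotProduct_sub, sub_dotProduct, dotProduct_smul, smul_dotProduct, hg, smul_eq_mul,
    dotProduct_comm u g]
  ring

end Projection

theorem Matrix.dotProduct_self_pos {n : Type*} [Fintype n] {b : n → ℝ} (hb : b ≠ 0) :
    0 < b ⬝ᵥ b := by
  simpa using dotProduct_self_star_pos_iff.mpr hb

theorem exists_pos_smul_dotProduct_self_eq_one {n : Type*} [Fintype n] {b : n → ℝ} (hb : b ≠ 0) :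
    ∃ c : ℝ, 0 < c ∧ c • b ⬝ᵥ c • b = 1 := by
  have hbb := dotProduct_self_pos hb
  refine ⟨(√(b ⬝ᵥ b))⁻¹, by positivity, ?_⟩
  rw [smul_dotProduct, dotProduct_smul, smul_smul, smul_eq_mul, ← mul_inv,
    Real.mul_self_sqrt hbb.le, inv_mul_cancel₀ hbb.ne']

section Cross

variable {R : Type*} [CommRing R]

-- The expansion of `g ⨯₃ a ∈ g⊥` in the orthogonal basis `b, g ⨯₃ b` of `g⊥`.
theorem dotProduct_self_smul_cross {g b : Fin 3 → R} (hb : g ⬝ᵥ b = 0) (a : Fin 3 → R) :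
    (b ⬝ᵥ b) • g ⨯₃ a = (g ⨯₃ a ⬝ᵥ b) • b + (a ⬝ᵥ b) • g ⨯₃ b := by
  have h := cross_cross_eq_smul_sub_smul b (g ⨯₃ a) b
  rw [cross_cross_eq_smul_sub_smul', hb, zero_smul, sub_zero, dotProduct_comm b a, map_smul,
    LinearMap.smul_apply] at h
  rw [h]
  abel

theorem cross_dotProduct_eq_neg (g a b : Fin 3 → R) : g ⨯₃ a ⬝ᵥ b = -(g ⨯₃ b ⬝ᵥ a) := by
  rw [dotProduct_comm, triple_product_permutation, dotProduct_comm (g ⨯₃ b),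
    triple_product_permutation, ← cross_anticomm g b, dotProduct_neg]

end Cross

section Plane

variable {g : Fin 3 → ℝ}

theorem cross_dotProduct_nonneg_trans {a b c : Fin 3 → ℝ} (hgb : g ⬝ᵥ b = 0) (hb : b ≠ 0)
    (hab : 0 ≤ a ⬝ᵥ b) (hbc : 0 ≤ b ⬝ᵥ c) (h₁ : 0 ≤ g ⨯₃ a ⬝ᵥ b) (h₂ : 0 ≤ g ⨯₃ b ⬝ᵥ c) :
    0 ≤ g ⨯₃ a ⬝ᵥ c := by
  have key := congrArg (· ⬝ᵥ c) (dotProduct_self_smul_cross hgb a)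
  simp only [smul_dotProduct, add_dotProduct, smul_eq_mul] at key
  refine nonneg_of_mul_nonneg_right ?_ (dotProduct_self_pos hb)
  rw [key]
  exact add_nonneg (mul_nonneg h₁ hbc) (mul_nonneg hab h₂)

theorem exists_ne_zero_cross_quadrant {ι : Type*} [Fintype ι] {w : ι → Fin 3 → ℝ}
    (hgw : ∀ i, g ⬝ᵥ w i = 0) (hw : ∀ i j, 0 ≤ w i ⬝ᵥ w j) :
    ∃ b ≠ 0, g ⬝ᵥ b = 0 ∧ ∀ i, 0 ≤ b ⬝ᵥ w i ∧ 0 ≤ g ⨯₃ b ⬝ᵥ w i := by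
  classical
  by_cases hw0 : ∀ i, w i = 0
  · obtain ⟨b, hb, hgb⟩ := exists_ne_zero_dotProduct_eq_zero g
    exact ⟨b, hb, by rwa [dotProduct_comm], by simp [hw0]⟩
  obtain ⟨i₀, hi₀⟩ := not_forall.mp hw0
  -- `0 ≤ g ⨯₃ w i ⬝ᵥ w j` says that `w j` lies counterclockwise of `w i` (seen from `g`); since all
  -- angles between the `w i` are at most a right angle this orders them, and `w m` is the first.
  obtain ⟨m, hm, hmin⟩ := Finset.exists_forall_rel_of_total_of_trans
    (r := fun i j => 0 ≤ g ⨯₃ w i ⬝ᵥ w j) (s := {i | w i ≠ 0}) ⟨i₀, by simpa using hi₀⟩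
    (fun i _ j _ => (le_total 0 _).imp_right fun h => by rw [cross_dotProduct_eq_neg]; linarith)
    (fun i _ j hj k _ =>
      cross_dotProduct_nonneg_trans (hgw j) (by simpa using hj) (hw i j) (hw j k))
  refine ⟨w m, by simpa using hm, hgw m, fun i => ⟨hw m i, ?_⟩⟩
  by_cases hi : w i = 0
  · simp [hi]
  · exact hmin i (by simpa using hi)

theorem exists_unit_cross_quadrant {ι : Type*} [Fintype ι] {w : ι → Fin 3 → ℝ}
    (hgw : ∀ i, g ⬝ᵥ w i = 0) (hw : ∀ i j, 0 ≤ w i ⬝ᵥ w j) :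
    ∃ a, a ⬝ᵥ a = 1 ∧ g ⬝ᵥ a = 0 ∧ ∀ i, 0 ≤ a ⬝ᵥ w i ∧ 0 ≤ g ⨯₃ a ⬝ᵥ w i := by
  obtain ⟨b, hb, hgb, hbw⟩ := exists_ne_zero_cross_quadrant hgw hw
  obtain ⟨c, hc, hcb⟩ := exists_pos_smul_dotProduct_self_eq_one hb
  refine ⟨c • b, hcb, by simp [hgb], fun i => ?_⟩
  simp only [map_smul, smul_dotProduct, smul_eq_mul]
  exact ⟨mul_nonneg hc.le (hbw i).1, mul_nonneg hc.le (hbw i).2⟩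

end Plane

theorem of_cross_mem_orthogonalGroup {R : Type*} [CommRing R] {g a : Fin 3 → R}
    (hg : g ⬝ᵥ g = 1) (ha : a ⬝ᵥ a = 1) (hga : g ⬝ᵥ a = 0) :
    Matrix.of ![a, g ⨯₃ a, g] ∈ orthogonalGroup (Fin 3) R := by
  rw [mem_orthogonalGroup_iff_dotProduct]
  have hag : a ⬝ᵥ g = 0 := by rwa [dotProduct_comm]
  have hca : g ⨯₃ a ⬝ᵥ a = 0 := by rw [dotProduct_comm, dot_cross_self]
  have hcg : g ⨯₃ a ⬝ᵥ g = 0 := by rw [dotProduct_comm, dot_self_cross]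
  intro i j
  change ![a, g ⨯₃ a, g] i ⬝ᵥ ![a, g ⨯₃ a, g] j = _
  fin_cases i <;> fin_cases j <;> simp [cross_dot_cross, hg, ha, hga, hag, hca, hcg]

theorem embeddable_iff_exists_unit_normal
    (p : ℕ) (u : Fin p → (Fin 3 → ℝ)) :
    (∃ Q ∈ Matrix.orthogonalGroup (Fin 3) ℝ, ∀ i, 0 ≤ Q.mulVec (u i)) ↔
    (∃ g : Fin 3 → ℝ, g ⬝ᵥ g = 1 ∧
      ∀ i j, (g ⬝ᵥ u i) * (g ⬝ᵥ u j) ≤ u i ⬝ᵥ u j ∧ 0 ≤ (g ⬝ᵥ u i) * (g ⬝ᵥ u j)) := by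
  constructor
  · rintro ⟨Q, hQ, hu⟩
    exact ⟨Q 2, row_unit_normal_of_mulVec_nonneg hQ hu 2⟩
  rintro ⟨g₀, hg₀, hu⟩
  obtain ⟨g, hg, hgu, hle⟩ : ∃ g : Fin 3 → ℝ, g ⬝ᵥ g = 1 ∧ (∀ i, 0 ≤ g ⬝ᵥ u i) ∧
      ∀ i j, (g ⬝ᵥ u i) * (g ⬝ᵥ u j) ≤ u i ⬝ᵥ u j := by
    rcases forall_nonneg_or_forall_nonpos_of_mul_nonneg fun i j => (hu i j).2 with h | h
    · exact ⟨g₀, hg₀, h, fun i j => (hu i j).1⟩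
    · exact ⟨-g₀, by simpa using hg₀, by simpa using h, by simpa using fun i j => (hu i j).1⟩
  set w := fun i => u i - (g ⬝ᵥ u i) • g
  obtain ⟨a, ha, hga, haw⟩ := exists_unit_cross_quadrant (w := w)
    (fun i => dotProduct_sub_smul_self hg (u i))
    (fun i j => by simpa [w, sub_smul_dotProduct_sub_smul hg] using hle i j)
  have hu_w : ∀ x, x ⬝ᵥ g = 0 → ∀ i, x ⬝ᵥ u i = x ⬝ᵥ w i := fun x hx i => by
    simp [w, dotProduct_sub, hx]
  refine ⟨_, of_cross_mem_orthogonalGroup hg ha hga, fun i k => ?_⟩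
  fin_cases k
  · simpa [hu_w a (by rwa [dotProduct_comm]) i] using (haw i).1
  · simpa [hu_w (g ⨯₃ a) (by rw [dotProduct_comm, dot_self_cross]) i] using (haw i).2
  · simpa using hgu i
end

section
/- Let u₁, …, u_{p−1} be nonzero vectors in ℝ² such that the angle between u₁ and u₂ is the largest among the angles of all pairs from {u₁, …, u_{p−1}} and this largest angle is at most π/2, and such that the pair (u₁, u₂) is positively oriented. Let u_p ∈ ℝ² be nonzero. Then the largest angle among all pairs from {u₁, …, u_p} is at most π/2 if and only if ⟨u₁, u_p⟩ ≥ 0 and ⟨u₂, u_p⟩ ≥ 0. -/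
/-! Both conditions are necessary, being two of the new angles. Conversely, maximality of the
angle between `u₁` and `u₂` puts every `uᵢ` in the closed cone spanned by `u₁` and `u₂`: the
identity `‖a‖² ⟪b, v⟫ - ⟪a, b⟫ ⟪a, v⟫ = det(a, b) det(a, v)`, with `cos ∠(b, v) ≥ cos ∠(a, b) ≥ 0`
and Cauchy–Schwarz, gives `det(a, v) ≥ 0`, and symmetrically `det(v, b) ≥ 0`. Then
`det(a, b) ⟪v, w⟫ = det(v, b) ⟪a, w⟫ + det(a, v) ⟪b, w⟫ ≥ 0`. -/

open Matrix Real

/-- The angle between two vectors of `ℝ²`. -/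
noncomputable def ang (u v : Fin 2 → ℝ) : ℝ :=
  Real.arccos ((u ⬝ᵥ v) / (Real.sqrt (u ⬝ᵥ u) * Real.sqrt (v ⬝ᵥ v)))

/-- The pair `(u, v)` is positively oriented: the determinant of the matrix
with columns `u`, `v` is positive. -/
def posOriented (u v : Fin 2 → ℝ) : Prop := 0 < u 0 * v 1 - u 1 * v 0

open InnerProductGeometry RealInnerProductSpace

namespace InnerProductGeometry

variable {V : Type*} [NormedAddCommGroup V] [InnerProductSpace ℝ V]

theorem angle_le_pi_div_two_iff_inner_nonneg (x y : V) : angle x y ≤ π / 2 ↔ 0 ≤ ⟪x, y⟫ := by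
  rcases eq_or_ne x 0 with rfl | hx
  · simp
  rcases eq_or_ne y 0 with rfl | hy
  · simp
  rw [angle, arccos_le_pi_div_two, le_div_iff₀ (by positivity), zero_mul]

theorem inner_mul_norm_le_of_angle_le {x y z : V} (h : angle x y ≤ angle x z) :
    ⟪x, z⟫ * ‖y‖ ≤ ⟪x, y⟫ * ‖z‖ := by
  have hcos : cos (angle x z) ≤ cos (angle x y) :=
    cos_le_cos_of_nonneg_of_le_pi (angle_nonneg x y) (angle_le_pi x z) h
  rcases (norm_nonneg x).eq_or_lt with hx | hx
  · simp [norm_eq_zero.mp hx.symm]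
  rw [← cos_angle_mul_norm_mul_norm x z, ← cos_angle_mul_norm_mul_norm x y]
  have := mul_le_mul_of_nonneg_right hcos (by positivity : 0 ≤ ‖x‖ * ‖y‖ * ‖z‖)
  nlinarith

end InnerProductGeometry

namespace EuclideanSpace

def cross (x y : EuclideanSpace ℝ (Fin 2)) : ℝ := x 0 * y 1 - x 1 * y 0

theorem inner_eq_fin_two (x y : EuclideanSpace ℝ (Fin 2)) : ⟪x, y⟫ = x 0 * y 0 + x 1 * y 1 := by
  simp [EuclideanSpace.inner_eq_star_dotProduct, dotProduct, Fin.sum_univ_two, mul_comm]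

theorem norm_sq_mul_inner_sub_inner_mul_inner (a b v : EuclideanSpace ℝ (Fin 2)) :
    ‖a‖ ^ 2 * ⟪b, v⟫ - ⟪a, b⟫ * ⟪a, v⟫ = cross a b * cross a v := by
  rw [← real_inner_self_eq_norm_sq]
  simp only [inner_eq_fin_two, cross]
  ring

theorem cross_anticomm (x y : EuclideanSpace ℝ (Fin 2)) : -cross x y = cross y x := by
  simp only [cross]
  ring

theorem cross_mul_inner (a b v w : EuclideanSpace ℝ (Fin 2)) :
    cross a b * ⟪v, w⟫ = cross v b * ⟪a, w⟫ + cross a v * ⟪b, w⟫ := by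
  simp only [inner_eq_fin_two, cross]
  ring

theorem cross_mul_cross_nonneg_of_angle_le {a b v : EuclideanSpace ℝ (Fin 2)}
    (hab : 0 ≤ ⟪a, b⟫) (h : angle b v ≤ angle a b) : 0 ≤ cross a b * cross a v := by
  rw [angle_comm a b] at h
  have hcos : ⟪a, b⟫ * ‖v‖ ≤ ⟪b, v⟫ * ‖a‖ := by
    simpa only [real_inner_comm a b] using inner_mul_norm_le_of_angle_le h
  have hcs : 0 ≤ ⟪a, b⟫ * (‖a‖ * ‖v‖ - ⟪a, v⟫) :=
    mul_nonneg hab (sub_nonneg.mpr (real_inner_le_norm a v))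
  rw [← norm_sq_mul_inner_sub_inner_mul_inner]
  nlinarith [norm_nonneg a]

theorem inner_nonneg_of_angle_le {a b v w : EuclideanSpace ℝ (Fin 2)} (hor : 0 < cross a b)
    (hab : 0 ≤ ⟪a, b⟫) (hav : angle a v ≤ angle a b) (hbv : angle b v ≤ angle a b)
    (haw : 0 ≤ ⟪a, w⟫) (hbw : 0 ≤ ⟪b, w⟫) : 0 ≤ ⟪v, w⟫ := by
  have hcav : 0 ≤ cross a v :=
    (mul_nonneg_iff_of_pos_left hor).mp (cross_mul_cross_nonneg_of_angle_le hab hbv)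
  have hcvb : 0 ≤ cross v b := by
    have h := cross_mul_cross_nonneg_of_angle_le (real_inner_comm a b ▸ hab)
      (angle_comm a b ▸ hav)
    rw [← cross_anticomm a b, ← cross_anticomm v b, neg_mul_neg] at h
    exact (mul_nonneg_iff_of_pos_left hor).mp h
  refine (mul_nonneg_iff_of_pos_left hor).mp ?_
  rw [cross_mul_inner]
  exact add_nonneg (mul_nonneg hcvb haw) (mul_nonneg hcav hbw)

end EuclideanSpace

theorem dotProduct_eq_inner_toLp (u v : Fin 2 → ℝ) :
    u ⬝ᵥ v = ⟪WithLp.toLp 2 u, WithLp.toLp 2 v⟫ := by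
  rw [EuclideanSpace.inner_toLp_toLp, star_trivial, dotProduct_comm]

theorem ang_eq_angle_toLp (u v : Fin 2 → ℝ) :
    ang u v = angle (WithLp.toLp 2 u) (WithLp.toLp 2 v) := by
  rw [ang, angle, norm_eq_sqrt_real_inner, norm_eq_sqrt_real_inner, ← dotProduct_eq_inner_toLp,
    ← dotProduct_eq_inner_toLp, ← dotProduct_eq_inner_toLp]

theorem ang_le_pi_div_two_iff (u v : Fin 2 → ℝ) : ang u v ≤ π / 2 ↔ 0 ≤ u ⬝ᵥ v := by
  rw [ang_eq_angle_toLp, angle_le_pi_div_two_iff_inner_nonneg, dotProduct_eq_inner_toLp]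

theorem dotProduct_nonneg_of_ang_le {a b v w : Fin 2 → ℝ} (hor : posOriented a b)
    (hab : 0 ≤ a ⬝ᵥ b) (hav : ang a v ≤ ang a b) (hbv : ang b v ≤ ang a b)
    (haw : 0 ≤ a ⬝ᵥ w) (hbw : 0 ≤ b ⬝ᵥ w) : 0 ≤ v ⬝ᵥ w := by
  simp only [ang_eq_angle_toLp, dotProduct_eq_inner_toLp] at *
  -- `posOriented a b` is definitionally `0 < cross (toLp 2 a) (toLp 2 b)`.
  exact EuclideanSpace.inner_nonneg_of_angle_le hor hab hav hbv haw hbw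

theorem largest_angle_nonobtuse_iff_general
    (n : ℕ) (u : Fin n → (Fin 2 → ℝ))
    (h0 : 0 < n) (h1 : 1 < n)
    (hmax : ∀ i j, ang (u i) (u j) ≤ ang (u ⟨0, h0⟩) (u ⟨1, h1⟩))
    (hnonobtuse : ang (u ⟨0, h0⟩) (u ⟨1, h1⟩) ≤ π / 2)
    (horient : posOriented (u ⟨0, h0⟩) (u ⟨1, h1⟩))
    (w : Fin 2 → ℝ) :
    (∀ i j : Fin (n + 1), ang ((Fin.snoc u w : Fin (n + 1) → (Fin 2 → ℝ)) i) ((Fin.snoc u w : Fin (n + 1) → (Fin 2 → ℝ)) j) ≤ π / 2) ↔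
      (0 ≤ u ⟨0, h0⟩ ⬝ᵥ w ∧ 0 ≤ u ⟨1, h1⟩ ⬝ᵥ w) := by
  have hpairs (i j : Fin n) : 0 ≤ u i ⬝ᵥ u j :=
    (ang_le_pi_div_two_iff _ _).mp ((hmax i j).trans hnonobtuse)
  have hcone : (∀ i, 0 ≤ u i ⬝ᵥ w) ↔ 0 ≤ u ⟨0, h0⟩ ⬝ᵥ w ∧ 0 ≤ u ⟨1, h1⟩ ⬝ᵥ w :=
    ⟨fun h => ⟨h _, h _⟩, fun ⟨haw, hbw⟩ i =>
      dotProduct_nonneg_of_ang_le horient (hpairs _ _) (hmax _ _) (hmax _ _) haw hbw⟩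
  simp only [ang_le_pi_div_two_iff, Fin.forall_fin_succ', Fin.snoc_castSucc, Fin.snoc_last,
    dotProduct_comm w, hpairs, implies_true, true_and, and_self_left]
  rw [and_iff_left (star_trivial w ▸ dotProduct_self_star_nonneg w), hcone]

theorem largest_angle_nonobtuse_iff
    (n : ℕ) (hn : 2 ≤ n) (u : Fin n → (Fin 2 → ℝ))
    (hu : ∀ i, u i ≠ 0)
    (h0 : 0 < n) (h1 : 1 < n)
    (hmax : ∀ i j, ang (u i) (u j) ≤ ang (u ⟨0, h0⟩) (u ⟨1, h1⟩))
    (hnonobtuse : ang (u ⟨0, h0⟩) (u ⟨1, h1⟩) ≤ π / 2)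
    (horient : posOriented (u ⟨0, h0⟩) (u ⟨1, h1⟩))
    (w : Fin 2 → ℝ) (hw : w ≠ 0) :
    (∀ i j : Fin (n + 1), ang ((Fin.snoc u w : Fin (n + 1) → (Fin 2 → ℝ)) i) ((Fin.snoc u w : Fin (n + 1) → (Fin 2 → ℝ)) j) ≤ π / 2) ↔
      (0 ≤ u ⟨0, h0⟩ ⬝ᵥ w ∧ 0 ≤ u ⟨1, h1⟩ ⬝ᵥ w) :=
  largest_angle_nonobtuse_iff_general n u h0 h1 hmax hnonobtuse horient w
end

section
/- Let A be a real symmetric positive semidefinite n×n matrix with all entries nonnegative and rank A = 2. Then there exists an n×2 matrix B with all entries nonnegative such that A = B·Bᵀ. In particular, every doubly nonnegative matrix of rank 2 is completely positive with cp-rank at most 2. -/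
/-!
A positive semidefinite `A` of rank 2 is the Gram matrix `C * Cᵀ` of `n` vectors in the plane
(the rows of `C`), and `A ≥ 0` says that any two of them make an angle of at most `π / 2`.
Such vectors lie in a closed quarter-plane: going round from an extreme nonzero row `w`, every
row `c` satisfies `⟪w, c⟫ ≥ 0` and `det (w, c) ≥ 0`. Rotating `w / ‖w‖` onto the first basis
vector therefore makes every row nonnegative, and rotating the rows does not change `C * Cᵀ`.
-/

open Matrix
open scoped ComplexOrder

theorem Matrix.submatrix_mul_submatrix_of_forall_apply_eq_zero {l n o α : Type*} [Fintype n]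
    [NonUnitalNonAssocSemiring α] {p : n → Prop} [DecidablePred p] (M : Matrix l n α)
    (N : Matrix n o α) (hM : ∀ i j, ¬ p j → M i j = 0) :
    M.submatrix id (Subtype.val (p := p)) * N.submatrix (Subtype.val (p := p)) id = M * N := by
  refine Matrix.ext fun i k => ?_
  simp only [Matrix.mul_apply, submatrix_apply, id]
  have hzero : ∑ j : {j // ¬ p j}, M i j * N j k = 0 :=
    Finset.sum_eq_zero fun j _ => by rw [hM i j j.2, zero_mul]
  rw [← Fintype.sum_subtype_add_sum_subtype p (fun j => M i j * N j k), hzero, add_zero]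

theorem Matrix.PosSemidef.exists_eq_mul_conjTranspose {𝕜 n : Type*} [RCLike 𝕜] [Fintype n]
    [DecidableEq n] {A : Matrix n n 𝕜} (hA : A.PosSemidef) :
    ∃ C : Matrix n (Fin A.rank) 𝕜, A = C * Cᴴ := by
  set μ := hA.1.eigenvalues
  set U : Matrix n n 𝕜 := ↑hA.1.eigenvectorUnitary
  set F := U * diagonal (fun j => (√(μ j) : 𝕜))
  have hF : A = F * Fᴴ := by
    have hsq : ∀ j, (√(μ j) : 𝕜) * star (√(μ j) : 𝕜) = μ j := fun j => by
      rw [RCLike.star_def, RCLike.conj_ofReal, ← RCLike.ofReal_mul,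
        Real.mul_self_sqrt (hA.eigenvalues_nonneg j)]
    conv_lhs => rw [hA.1.spectral_theorem]
    simp only [F, Unitary.conjStarAlgAut_apply, conjTranspose_mul, diagonal_conjTranspose,
      mul_assoc]
    rw [← mul_assoc (diagonal _), diagonal_mul_diagonal]
    congr 3
    ext j
    exact (hsq j).symm
  have hF_col : ∀ i j, ¬ μ j ≠ 0 → F i j = 0 := fun i j hj => by
    simp [F, mul_diagonal, not_not.1 hj]
  let e : Fin A.rank ≃ {j // μ j ≠ 0} :=
    (Fintype.equivFinOfCardEq hA.1.rank_eq_card_non_zero_eigs.symm).symm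
  refine ⟨F.submatrix id (Subtype.val ∘ e), ?_⟩
  conv_lhs => rw [hF, ← submatrix_mul_submatrix_of_forall_apply_eq_zero _ _ hF_col,
    ← submatrix_id_id (_ * _), submatrix_mul _ _ _ e _ e.bijective]
  rw [conjTranspose_submatrix]
  rfl

theorem det_fin_two_nonneg_trans {u v w : Fin 2 → ℝ} (hv : v ≠ 0) (huv : 0 ≤ u ⬝ᵥ v)
    (hvw : 0 ≤ v ⬝ᵥ w) (h₁ : 0 ≤ (of ![u, v]).det) (h₂ : 0 ≤ (of ![v, w]).det) :
    0 ≤ (of ![u, w]).det := by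
  have key : (v ⬝ᵥ v) * (of ![u, w]).det =
      (u ⬝ᵥ v) * (of ![v, w]).det + (of ![u, v]).det * (v ⬝ᵥ w) := by
    simp only [det_fin_two, dotProduct, Fin.sum_univ_two, of_apply, cons_val_zero, cons_val_one]
    ring
  have hvv : 0 < v ⬝ᵥ v := by simpa using dotProduct_self_star_pos_iff.2 hv
  exact nonneg_of_mul_nonneg_right (key ▸ by positivity) hvv

theorem exists_forall_det_fin_two_nonneg {ι : Type*} [Finite ι] (v : ι → Fin 2 → ℝ)
    (hv : ∀ i j, 0 ≤ v i ⬝ᵥ v j) {i₀ : ι} (hi₀ : v i₀ ≠ 0) :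
    ∃ j, v j ≠ 0 ∧ ∀ i, 0 ≤ (of ![v j, v i]).det := by
  have := Fintype.ofFinite ι
  -- `r a b` says that `v b` comes before `v a` in the counterclockwise order.
  let r : {i // v i ≠ 0} → {i // v i ≠ 0} → Prop := fun a b => 0 ≤ (of ![v b, v a]).det
  have : IsTrans _ r :=
    ⟨fun a b c hab hbc => det_fin_two_nonneg_trans b.2 (hv c b) (hv b a) hbc hab⟩
  have hdir : Directed r id := fun a b => by
    rcases le_total 0 (of ![v b, v a]).det with h | h
    · exact ⟨b, h, by simp [r, det_fin_two, mul_comm]⟩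
    · refine ⟨a, by simp [r, det_fin_two, mul_comm], ?_⟩
      simp only [r, id, det_fin_two, of_apply, cons_val_zero, cons_val_one] at h ⊢
      linarith
  have : Nonempty {i // v i ≠ 0} := ⟨⟨i₀, hi₀⟩⟩
  obtain ⟨j, hj⟩ := hdir.finset_le Finset.univ
  refine ⟨j, j.2, fun i => ?_⟩
  by_cases hi : v i = 0
  · simp [hi, det_fin_two]
  · exact hj ⟨i, hi⟩ (Finset.mem_univ _)

theorem exists_dotProduct_self_eq_one_forall_nonneg {ι : Type*} [Finite ι] (v : ι → Fin 2 → ℝ)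
    (hv : ∀ i j, 0 ≤ v i ⬝ᵥ v j) :
    ∃ w : Fin 2 → ℝ, w ⬝ᵥ w = 1 ∧ ∀ i, 0 ≤ w ⬝ᵥ v i ∧ 0 ≤ (of ![w, v i]).det := by
  by_cases hzero : ∀ i, v i = 0
  · exact ⟨![1, 0], by simp, fun i => by simp [hzero i, det_fin_two]⟩
  obtain ⟨i₀, hi₀⟩ := not_forall.1 hzero
  obtain ⟨j, hj, hdet⟩ := exists_forall_det_fin_two_nonneg v hv hi₀
  have hpos : 0 < v j ⬝ᵥ v j := by simpa using dotProduct_self_star_pos_iff.2 hj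
  set c := (√(v j ⬝ᵥ v j))⁻¹
  have hc : 0 ≤ c := by positivity
  refine ⟨c • v j, ?_, fun i => ⟨?_, ?_⟩⟩
  · rw [smul_dotProduct, dotProduct_smul, smul_eq_mul, smul_eq_mul, ← mul_assoc, ← sq,
      inv_pow, Real.sq_sqrt hpos.le, inv_mul_cancel₀ hpos.ne']
  · rw [smul_dotProduct, smul_eq_mul]
    exact mul_nonneg hc (hv j i)
  · have hsmul : (of ![c • v j, v i]).det = c * (of ![v j, v i]).det := by
      simp only [det_fin_two, of_apply, cons_val_zero, cons_val_one, Pi.smul_apply, smul_eq_mul]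
      ring
    rw [hsmul]
    exact mul_nonneg hc (hdet i)

theorem exists_mem_orthogonalGroup_forall_mul_nonneg {ι : Type*} [Finite ι]
    (C : Matrix ι (Fin 2) ℝ) (hC : ∀ i j, 0 ≤ C i ⬝ᵥ C j) :
    ∃ R ∈ orthogonalGroup (Fin 2) ℝ, ∀ i k, 0 ≤ (C * R) i k := by
  obtain ⟨w, hw, hnonneg⟩ := exists_dotProduct_self_eq_one_forall_nonneg (fun i => C i) hC
  refine ⟨!![w 0, -w 1; w 1, w 0], ?_, fun i k => ?_⟩
  · rw [mem_orthogonalGroup_iff]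
    simp only [dotProduct, Fin.sum_univ_two] at hw
    ext a b
    fin_cases a <;> fin_cases b <;> simp [Matrix.mul_apply, Fin.sum_univ_two, ← hw] <;> ring
  · obtain ⟨hdot, hdet⟩ := hnonneg i
    fin_cases k
    · simpa [Matrix.mul_apply, dotProduct, Fin.sum_univ_two, mul_comm] using hdot
    · simpa [Matrix.mul_apply, det_fin_two, Fin.sum_univ_two, mul_comm, sub_eq_neg_add] using hdet

theorem rank_two_doubly_nonnegative_is_completely_positive
    (n : ℕ) (A : Matrix (Fin n) (Fin n) ℝ)
    (hA : A.PosSemidef) (hnonneg : ∀ i j, 0 ≤ A i j) (hrank : A.rank = 2) :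
    ∃ B : Matrix (Fin n) (Fin 2) ℝ, (∀ i j, 0 ≤ B i j) ∧ A = B * Bᵀ := by
  obtain ⟨C, hC⟩ : ∃ C : Matrix (Fin n) (Fin 2) ℝ, A = C * Cᵀ := by
    have := hA.exists_eq_mul_conjTranspose
    rw [hrank] at this
    simpa only [conjTranspose_eq_transpose_of_trivial] using this
  have hdot : ∀ i j, 0 ≤ C i ⬝ᵥ C j := fun i j => by
    simpa [hC, Matrix.mul_apply'] using hnonneg i j
  obtain ⟨R, hR, hCR⟩ := exists_mem_orthogonalGroup_forall_mul_nonneg C hdot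
  refine ⟨C * R, hCR, ?_⟩
  rw [transpose_mul, Matrix.mul_assoc, ← Matrix.mul_assoc R, (mem_orthogonalGroup_iff _ _).1 hR,
    Matrix.one_mul, hC]
end

section
/- Let φ₂(x) = (√6/4)(x²−1), φ₃(x) = (√10/4)·x·(x²−1), φ₄(x) = (√14/16)(5x²−1)(x²−1), and let Φ(x) = (φ₂(x), φ₃(x), φ₄(x)) ∈ ℝ³. There exists no orthogonal linear map Q of ℝ³ such that QΦ(x) has all three coordinates nonnegative for every x ∈ [−1, 1]. -/
/-! Each coordinate of `Q Φ(x)` is `(1 - x²) p(x)` for a quadratic `p = C + D x + g x²` that is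
nonnegative on `[-1, 1]`, and such a quadratic satisfies `D² ≤ 4 C (C + g)`, strictly when `D ≠ 0`.
Since `Q` preserves dot products, summing over the rows of `Q` gives `5/8` on both sides,
so all `D` vanish; but they sum in squares to `5/8`. -/

open Matrix

/-- The Lobatto curve `Φ(x) = (φ₂(x), φ₃(x), φ₄(x))`. -/
noncomputable def lobattoCurve (x : ℝ) : Fin 3 → ℝ :=
  ![Real.sqrt 6 / 4 * (x ^ 2 - 1),
    Real.sqrt 10 / 4 * x * (x ^ 2 - 1),
    Real.sqrt 14 / 16 * (5 * x ^ 2 - 1) * (x ^ 2 - 1)]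

open Set

theorem Matrix.dotProduct_mulVec_mulVec_of_mem_orthogonalGroup_s12 {n R : Type*} [Fintype n]
    [DecidableEq n] [CommRing R] {Q : Matrix n n R} (hQ : Q ∈ orthogonalGroup n R)
    (a b : n → R) : Q *ᵥ a ⬝ᵥ Q *ᵥ b = a ⬝ᵥ b := by
  rw [dotProduct_mulVec, ← vecMul_transpose, vecMul_vecMul,
    (mem_orthogonalGroup_iff' n R).mp hQ, vecMul_one]

/-- Evaluating at `t = -D / (2 (C + g))`, where `|t| ≤ 1/2`, gives
`(C + g) (4 C (C + g) - D²) ≥ C D²`. -/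
theorem quadratic_sq_lt_of_nonneg_on_Icc {C D g : ℝ}
    (h : ∀ x ∈ Icc (-1 : ℝ) 1, 0 ≤ C + D * x + g * x ^ 2) (hD : D ≠ 0) :
    D ^ 2 < 4 * C * (C + g) := by
  have hC : 0 ≤ C := by simpa using h 0 (by norm_num)
  have hplus : 0 ≤ C + D + g := by linarith [h 1 (by norm_num)]
  have hminus : 0 ≤ C - D + g := by linarith [h (-1) (by norm_num)]
  have hS : 0 < C + g := by
    rcases hD.lt_or_gt with hneg | hpos <;> linarith
  set t := -D / (2 * (C + g))
  have ht : t ∈ Icc (-1 : ℝ) 1 := by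
    constructor
    · rw [le_div_iff₀ (by positivity)]; linarith
    · rw [div_le_iff₀ (by positivity)]; linarith
  have hvertex : C * D ^ 2 ≤ (C + g) * (4 * C * (C + g) - D ^ 2) := by
    have key : 4 * (C + g) ^ 2 * (C + D * t + g * t ^ 2)
        = (C + g) * (4 * C * (C + g) - D ^ 2) - C * D ^ 2 := by
      simp only [t]; field_simp; ring
    nlinarith [mul_nonneg (by positivity : (0:ℝ) ≤ 4 * (C + g) ^ 2) (h t ht)]
  by_contra! hle
  have hC0 : C = 0 := by nlinarith [sq_pos_of_ne_zero hD]
  subst hC0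
  nlinarith [sq_pos_of_ne_zero hD]

theorem quadratic_sq_le_of_nonneg_on_Icc {C D g : ℝ}
    (h : ∀ x ∈ Icc (-1 : ℝ) 1, 0 ≤ C + D * x + g * x ^ 2) :
    D ^ 2 ≤ 4 * C * (C + g) := by
  rcases eq_or_ne D 0 with rfl | hD
  · have hC : 0 ≤ C := by simpa using h 0 (by norm_num)
    have hS : 0 ≤ C + g := by linarith [h 1 (by norm_num), h (-1) (by norm_num)]
    nlinarith [mul_nonneg hC hS]
  · exact (quadratic_sq_lt_of_nonneg_on_Icc h hD).le

theorem dotProduct_self_lt_of_quadratic_nonneg_on_Icc {ι : Type*} [Fintype ι] {C D g : ι → ℝ}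
    (h : ∀ i, ∀ x ∈ Icc (-1 : ℝ) 1, 0 ≤ C i + D i * x + g i * x ^ 2) (hD : D ≠ 0) :
    D ⬝ᵥ D < 4 * (C ⬝ᵥ (C + g)) := by
  obtain ⟨i, hi⟩ := Function.ne_iff.mp hD
  rw [dotProduct, dotProduct, Finset.mul_sum]
  refine Finset.sum_lt_sum (fun j _ => ?_) ⟨i, Finset.mem_univ i, ?_⟩ <;> simp only [Pi.add_apply]
  · linarith [quadratic_sq_le_of_nonneg_on_Icc (h j)]
  · linarith [quadratic_sq_lt_of_nonneg_on_Icc (h i) hi]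

noncomputable def lobattoConstCoeff : Fin 3 → ℝ := ![-(Real.sqrt 6 / 4), 0, Real.sqrt 14 / 16]

noncomputable def lobattoLinearCoeff : Fin 3 → ℝ := ![0, -(Real.sqrt 10 / 4), 0]

noncomputable def lobattoQuadCoeff : Fin 3 → ℝ := ![0, 0, -(5 * Real.sqrt 14 / 16)]

theorem lobattoCurve_eq_smul (x : ℝ) :
    lobattoCurve x = (1 - x ^ 2) •
      (lobattoConstCoeff + x • lobattoLinearCoeff + x ^ 2 • lobattoQuadCoeff) := by
  ext i
  fin_cases i <;>
    simp only [lobattoCurve, lobattoConstCoeff, lobattoLinearCoeff, lobattoQuadCoeff, Fin.zero_eta,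
      Fin.mk_one, Fin.reduceFinMk, cons_val_zero, cons_val_one, cons_val, head_cons, tail_cons,
      smul_cons, smul_eq_mul, Matrix.smul_empty, add_cons, empty_add_empty, Pi.smul_apply] <;>
    ring

theorem lobattoLinearCoeff_dotProduct_self : lobattoLinearCoeff ⬝ᵥ lobattoLinearCoeff = 5 / 8 := by
  simp only [lobattoLinearCoeff, dotProduct, Fin.sum_univ_three, cons_val_zero, cons_val_one,
    cons_val]
  linear_combination Real.mul_self_sqrt (show (0 : ℝ) ≤ 10 by norm_num) / 16

theorem lobattoConstCoeff_dotProduct_add :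
    4 * (lobattoConstCoeff ⬝ᵥ (lobattoConstCoeff + lobattoQuadCoeff)) = 5 / 8 := by
  simp only [lobattoConstCoeff, lobattoQuadCoeff, dotProduct, Fin.sum_univ_three, Pi.add_apply,
    cons_val_zero, cons_val_one, cons_val]
  linear_combination Real.mul_self_sqrt (show (0 : ℝ) ≤ 6 by norm_num) / 4
    - Real.mul_self_sqrt (show (0 : ℝ) ≤ 14 by norm_num) / 16

theorem lobattoQuadratic_nonneg_of_mulVec_lobattoCurve_nonneg {Q : Matrix (Fin 3) (Fin 3) ℝ}
    (hQ : ∀ x ∈ Icc (-1 : ℝ) 1, 0 ≤ Q *ᵥ lobattoCurve x) (i : Fin 3) :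
    ∀ x ∈ Icc (-1 : ℝ) 1, 0 ≤ (Q *ᵥ lobattoConstCoeff) i
      + (Q *ᵥ lobattoLinearCoeff) i * x + (Q *ᵥ lobattoQuadCoeff) i * x ^ 2 := by
  rw [← closure_Ioo (by norm_num : (-1 : ℝ) ≠ 1)]
  refine le_on_closure (fun x hx => ?_) (by fun_prop) (by fun_prop)
  have hfactor : 0 < 1 - x ^ 2 := by nlinarith [hx.1, hx.2]
  have := hQ x (Ioo_subset_Icc_self hx) i
  simp only [lobattoCurve_eq_smul, mulVec_smul, mulVec_add, Pi.smul_apply, Pi.add_apply,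
    Pi.zero_apply, smul_eq_mul, mul_comm x, mul_comm (x ^ 2)] at this
  exact nonneg_of_mul_nonneg_right this hfactor

theorem lobatto_curve_not_embeddable :
    ¬ ∃ Q ∈ Matrix.orthogonalGroup (Fin 3) ℝ,
      ∀ x ∈ Set.Icc (-1 : ℝ) 1, 0 ≤ Q.mulVec (lobattoCurve x) := by
  rintro ⟨Q, hQ, hpos⟩
  have hD : (Q *ᵥ lobattoLinearCoeff) ⬝ᵥ (Q *ᵥ lobattoLinearCoeff) = 5 / 8 := by
    rw [dotProduct_mulVec_mulVec_of_mem_orthogonalGroup_s12 hQ, lobattoLinearCoeff_dotProduct_self]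
  have hCg : 4 * ((Q *ᵥ lobattoConstCoeff) ⬝ᵥ (Q *ᵥ lobattoConstCoeff + Q *ᵥ lobattoQuadCoeff))
      = 5 / 8 := by
    rw [← mulVec_add, dotProduct_mulVec_mulVec_of_mem_orthogonalGroup_s12 hQ,
      lobattoConstCoeff_dotProduct_add]
  have hD0 : Q *ᵥ lobattoLinearCoeff ≠ 0 := fun h => by norm_num [h] at hD
  have hlt := dotProduct_self_lt_of_quadratic_nonneg_on_Icc
    (lobattoQuadratic_nonneg_of_mulVec_lobattoCurve_nonneg hpos) hD0
  linarith
end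

section
/- The four vectors v₁ = (√6, −√10, √14), v₂ = (√6, −√10/2, √14/16), v₃ = (√6, √10/2, √14/16), v₄ = (√6, √10, √14) in ℝ³ cannot be isometrically embedded into the nonnegative octant: there is no orthogonal linear map Q of ℝ³ such that Qv_i ≥ 0 for all i ∈ {1,2,3,4}. -/
/-!
Put `a = √6 • Qᵀ 0`, `b = √10 • Qᵀ 1`, `c = √14 • Qᵀ 2`. Then `Qv₁, Qv₄ = a + c ∓ b` and
`Qv₂, Qv₃ = a + c/16 ∓ b/2`, so the hypothesis reads `|b| ≤ a + c` and `|b|/2 ≤ a + c/16`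
coordinatewise, while orthogonality of `Q` makes `a, b, c` pairwise orthogonal with squared norms
`6, 10, 14` and turns every row into `aₖ²/6 + bₖ²/10 + cₖ²/14 = 1`.

Two coordinates `i, j` of `b` have the same sign, nonpositive after replacing `b` by `-b`. Since
`b ⊥ a + c` and `b ⊥ a + c/16`, the remaining coordinate `k` has to balance them, which gives
`10 - bₖ² ≤ bₖ(aₖ + cₖ)` and `10 - bₖ² ≤ 2bₖ(aₖ + cₖ/16)`; expanding
`0 ≤ Σ_{i,j} (a + c + b)(a + c/16 + b/2)` with the Gram relations gives one more quadratic
inequality in row `k` alone. With the row equation, these constraints on three reals are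
inconsistent, by a degree-three certificate.
-/

open Matrix

theorem sum_univ_three_rotate {M : Type*} [AddCommMonoid M] (f : Fin 3 → M) (k : Fin 3) :
    ∑ i, f i = f k + f (k + 1) + f (k + 2) := by
  rw [Fin.sum_univ_three]
  fin_cases k <;> simp <;> abel

theorem exists_add_one_add_two_same_sign {α : Type*} [LinearOrder α] [Zero α] (x : Fin 3 → α) :
    ∃ k : Fin 3, (x (k + 1) ≤ 0 ∧ x (k + 2) ≤ 0) ∨ (0 ≤ x (k + 1) ∧ 0 ≤ x (k + 2)) := by
  rcases le_total (x 0) 0 with h₀ | h₀ <;> rcases le_total (x 1) 0 with h₁ | h₁ <;>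
    rcases le_total (x 2) 0 with h₂ | h₂
  all_goals first
    | exact ⟨0, .inl ⟨h₁, h₂⟩⟩ | exact ⟨0, .inr ⟨h₁, h₂⟩⟩
    | exact ⟨1, .inl ⟨h₂, h₀⟩⟩ | exact ⟨1, .inr ⟨h₂, h₀⟩⟩
    | exact ⟨2, .inl ⟨h₀, h₁⟩⟩ | exact ⟨2, .inr ⟨h₀, h₁⟩⟩

namespace Matrix

variable {n R : Type*} [Fintype n] [DecidableEq n] [CommRing R] {Q : Matrix n n R}

theorem dotProduct_rows_of_mem_orthogonalGroup (hQ : Q ∈ orthogonalGroup n R) (i j : n) :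
    Q i ⬝ᵥ Q j = (1 : Matrix n n R) i j := by
  rw [← (mem_orthogonalGroup_iff _ _).1 hQ]; rfl

theorem dotProduct_cols_of_mem_orthogonalGroup (hQ : Q ∈ orthogonalGroup n R) (i j : n) :
    Qᵀ i ⬝ᵥ Qᵀ j = (1 : Matrix n n R) i j := by
  rw [← (mem_orthogonalGroup_iff' _ _).1 hQ]; rfl

end Matrix

theorem false_of_row_bounds {a b c : ℝ} (hb : 0 ≤ b) (hm : b ≤ a + c) (hp : b / 2 ≤ a + c / 16)
    (hbal₁ : 10 - b ^ 2 ≤ b * (a + c)) (hbal₂ : 10 - b ^ 2 ≤ 2 * b * (a + c / 16))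
    (hprod : 0 ≤ 55 / 8 - (a + c) * (a + c / 16) - b * (a + c / 16) - b * (a + c) / 2
      + (10 - b ^ 2) / 2)
    (hunit : a ^ 2 / 6 + b ^ 2 / 10 + c ^ 2 / 14 = 1) : False := by
  nlinarith [mul_nonneg (sub_nonneg.2 hbal₁) (sub_nonneg.2 hp),
    mul_nonneg (sub_nonneg.2 hbal₂) (sub_nonneg.2 hm)]

theorem false_of_scaled_columns_of_nonpos {a b c : Fin 3 → ℝ} (k : Fin 3)
    (hm : ∀ i, |b i| ≤ a i + c i) (hp : ∀ i, |b i| / 2 ≤ a i + c i / 16)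
    (hunit : a k ^ 2 / 6 + b k ^ 2 / 10 + c k ^ 2 / 14 = 1)
    (haa : a ⬝ᵥ a = 6) (hbb : b ⬝ᵥ b = 10) (hcc : c ⬝ᵥ c = 14)
    (hab : a ⬝ᵥ b = 0) (hbc : b ⬝ᵥ c = 0) (hac : a ⬝ᵥ c = 0)
    (hi : b (k + 1) ≤ 0) (hj : b (k + 2) ≤ 0) : False := by
  simp only [dotProduct, sum_univ_three_rotate _ k] at haa hbb hcc hab hbc hac
  have hneg : ∀ i, b i ≤ 0 → b i ^ 2 ≤ -b i * (a i + c i) ∧ b i ^ 2 ≤ -2 * b i * (a i + c i / 16) ∧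
      0 ≤ (a i + c i + b i) * (a i + c i / 16 + b i / 2) := by
    intro i hbi
    have hmi := hm i
    have hpi := hp i
    rw [abs_of_nonpos hbi] at hmi hpi
    exact ⟨by linarith [mul_le_mul_of_nonpos_left hmi hbi],
      by linarith [mul_le_mul_of_nonpos_left hpi hbi], mul_nonneg (by linarith) (by linarith)⟩
  obtain ⟨hi₁, hi₂, hi₃⟩ := hneg _ hi
  obtain ⟨hj₁, hj₂, hj₃⟩ := hneg _ hj
  have hbal₁ : 10 - b k ^ 2 ≤ b k * (a k + c k) := by linarith
  have hbal₂ : 10 - b k ^ 2 ≤ 2 * b k * (a k + c k / 16) := by linarith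
  have hprod : 0 ≤ 55 / 8 - (a k + c k) * (a k + c k / 16) - b k * (a k + c k / 16)
      - b k * (a k + c k) / 2 + (10 - b k ^ 2) / 2 := by linarith
  have hmk := hm k
  have hpk := hp k
  rcases lt_or_ge (b k) 0 with hk | hk
  · rw [abs_of_neg hk] at hmk
    linarith [mul_le_mul_of_nonpos_left hmk hk.le]
  · rw [abs_of_nonneg hk] at hmk hpk
    exact false_of_row_bounds hk hmk hpk hbal₁ hbal₂ hprod hunit

theorem false_of_scaled_columns {a b c : Fin 3 → ℝ}
    (hm : ∀ i, |b i| ≤ a i + c i) (hp : ∀ i, |b i| / 2 ≤ a i + c i / 16)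
    (hunit : ∀ i, a i ^ 2 / 6 + b i ^ 2 / 10 + c i ^ 2 / 14 = 1)
    (haa : a ⬝ᵥ a = 6) (hbb : b ⬝ᵥ b = 10) (hcc : c ⬝ᵥ c = 14)
    (hab : a ⬝ᵥ b = 0) (hbc : b ⬝ᵥ c = 0) (hac : a ⬝ᵥ c = 0) : False := by
  obtain ⟨k, ⟨hi, hj⟩ | ⟨hi, hj⟩⟩ := exists_add_one_add_two_same_sign b
  · exact false_of_scaled_columns_of_nonpos k hm hp (hunit k) haa hbb hcc hab hbc hac hi hj
  · exact false_of_scaled_columns_of_nonpos (b := -b) k (by simpa using hm) (by simpa using hp)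
      (by simpa using hunit k) haa (by simpa using hbb) hcc (by simpa using hab)
      (by simpa using hbc) hac (by simpa using hi) (by simpa using hj)

theorem false_of_orthogonal_rows_in_cone {Q : Matrix (Fin 3) (Fin 3) ℝ}
    (hQ : Q ∈ orthogonalGroup (Fin 3) ℝ)
    (hm : ∀ k, |√10 * Q k 1| ≤ √6 * Q k 0 + √14 * Q k 2)
    (hp : ∀ k, |√10 * Q k 1 / 2| ≤ √6 * Q k 0 + √14 * Q k 2 / 16) : False := by
  have hrow k : Q k ⬝ᵥ Q k = 1 := by simpa using dotProduct_rows_of_mem_orthogonalGroup hQ k k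
  have hcol := dotProduct_cols_of_mem_orthogonalGroup hQ
  have h6 : √6 * √6 = 6 := Real.mul_self_sqrt (by norm_num)
  have h10 : √10 * √10 = 10 := Real.mul_self_sqrt (by norm_num)
  have h14 : √14 * √14 = 14 := Real.mul_self_sqrt (by norm_num)
  refine false_of_scaled_columns (a := √6 • Qᵀ 0) (b := √10 • Qᵀ 1) (c := √14 • Qᵀ 2)
    (fun k => ?_) (fun k => ?_) (fun k => ?_) ?_ ?_ ?_ ?_ ?_ ?_
  · simpa using hm k
  · simpa [abs_div] using hp k
  · have := hrow k
    simp only [dotProduct, Fin.sum_univ_three] at this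
    simp only [Pi.smul_apply, transpose_apply, smul_eq_mul]
    linear_combination this + Q k 0 ^ 2 / 6 * h6 + Q k 1 ^ 2 / 10 * h10 + Q k 2 ^ 2 / 14 * h14
  all_goals simp [smul_dotProduct, dotProduct_smul, hcol, h6, h10, h14]

theorem four_curve_points_not_embeddable :
    ¬ ∃ Q ∈ Matrix.orthogonalGroup (Fin 3) ℝ,
      ∀ v ∈ ({![Real.sqrt 6, -Real.sqrt 10, Real.sqrt 14],
               ![Real.sqrt 6, -Real.sqrt 10 / 2, Real.sqrt 14 / 16],
               ![Real.sqrt 6, Real.sqrt 10 / 2, Real.sqrt 14 / 16],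
               ![Real.sqrt 6, Real.sqrt 10, Real.sqrt 14]} : Set (Fin 3 → ℝ)),
        0 ≤ Q.mulVec v := by
  rintro ⟨Q, hQ, hv⟩
  simp only [Set.mem_insert_iff, Set.mem_singleton_iff, forall_eq_or_imp, forall_eq] at hv
  obtain ⟨h₁, h₂, h₃, h₄⟩ := hv
  simp only [Pi.le_def, Pi.zero_apply, mulVec, dotProduct, Fin.sum_univ_three, cons_val_zero,
    cons_val_one, cons_val] at h₁ h₂ h₃ h₄
  refine false_of_orthogonal_rows_in_cone hQ (fun k => abs_le.2 ⟨?_, ?_⟩)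
    (fun k => abs_le.2 ⟨?_, ?_⟩)
  · linarith [h₄ k]
  · linarith [h₁ k]
  · linarith [h₃ k]
  · linarith [h₂ k]
end

section
/- The four vectors u₁ = (2, 0, 0), u₂ = (0, 2, 0), u₃ = (1, 1, √2), u₄ = (1, 1, −√2) in ℝ³ satisfy ⟨u_i, u_j⟩ ≥ 0 for all i, j, yet there is no orthogonal linear map Q of ℝ³ such that Qu_i ≥ 0 for all i ∈ {1,2,3,4}. -/
/-!
An orthogonal `Q` preserves the Gram matrix, so `Qu₁ ⊥ Qu₂` and `Qu₃ ⊥ Qu₄` while every other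
pair has positive inner product. For nonnegative vectors, orthogonality means disjoint supports and
a positive inner product means overlapping supports. So the supports of `Qu₁, Qu₂` are disjoint and
each meets both of the disjoint supports of `Qu₃, Qu₄`, which forces four distinct coordinates.
-/

open Matrix

/-- The vertices of half a regular octahedron. -/
noncomputable def pyramidVecs : Fin 4 → (Fin 3 → ℝ) :=
  ![![2, 0, 0], ![0, 2, 0], ![1, 1, Real.sqrt 2], ![1, 1, -Real.sqrt 2]]

namespace Matrix

theorem mulVec_dotProduct_mulVec_of_mem_orthogonalGroup_s14 {n R : Type*} [Fintype n] [DecidableEq n]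
    [CommRing R] {Q : Matrix n n R} (hQ : Q ∈ orthogonalGroup n R) (x y : n → R) :
    Q *ᵥ x ⬝ᵥ Q *ᵥ y = x ⬝ᵥ y := by
  rw [dotProduct_mulVec, vecMul_mulVec, (mem_orthogonalGroup_iff' n R).mp hQ, vecMul_one]

variable {ι : Type*} [Fintype ι] {a b c d : ι → ℝ}

theorem not_pos_and_pos_of_dotProduct_eq_zero (ha : 0 ≤ a) (hb : 0 ≤ b) (h : a ⬝ᵥ b = 0)
    (k : ι) : ¬ (0 < a k ∧ 0 < b k) := by
  rintro ⟨hak, hbk⟩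
  have hk := (Finset.sum_eq_zero_iff_of_nonneg fun i _ ↦ mul_nonneg (ha i) (hb i)).mp h k
    (Finset.mem_univ k)
  exact (mul_pos hak hbk).ne' hk

theorem exists_pos_and_pos_of_dotProduct_pos (ha : 0 ≤ a) (hb : 0 ≤ b) (h : 0 < a ⬝ᵥ b) :
    ∃ k, 0 < a k ∧ 0 < b k := by
  obtain ⟨k, -, hk⟩ := Finset.exists_lt_of_sum_lt (show ∑ _ : ι, (0 : ℝ) < a ⬝ᵥ b by simpa)
  exact ⟨k, pos_of_mul_pos_left hk (hb k), pos_of_mul_pos_right hk (ha k)⟩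

theorem four_le_card_of_nonneg_of_dotProduct (ha : 0 ≤ a) (hb : 0 ≤ b) (hc : 0 ≤ c) (hd : 0 ≤ d)
    (hab : a ⬝ᵥ b = 0) (hcd : c ⬝ᵥ d = 0) (hac : 0 < a ⬝ᵥ c) (had : 0 < a ⬝ᵥ d)
    (hbc : 0 < b ⬝ᵥ c) (hbd : 0 < b ⬝ᵥ d) : 4 ≤ Fintype.card ι := by
  classical
  obtain ⟨i, hai, hci⟩ := exists_pos_and_pos_of_dotProduct_pos ha hc hac
  obtain ⟨j, haj, hdj⟩ := exists_pos_and_pos_of_dotProduct_pos ha hd had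
  obtain ⟨k, hbk, hck⟩ := exists_pos_and_pos_of_dotProduct_pos hb hc hbc
  obtain ⟨l, hbl, hdl⟩ := exists_pos_and_pos_of_dotProduct_pos hb hd hbd
  have hab' := not_pos_and_pos_of_dotProduct_eq_zero ha hb hab
  have hcd' := not_pos_and_pos_of_dotProduct_eq_zero hc hd hcd
  have hij : i ≠ j := by rintro rfl; exact hcd' i ⟨hci, hdj⟩
  have hik : i ≠ k := by rintro rfl; exact hab' i ⟨hai, hbk⟩
  have hil : i ≠ l := by rintro rfl; exact hab' i ⟨hai, hbl⟩
  have hjk : j ≠ k := by rintro rfl; exact hab' j ⟨haj, hbk⟩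
  have hjl : j ≠ l := by rintro rfl; exact hab' j ⟨haj, hbl⟩
  have hkl : k ≠ l := by rintro rfl; exact hcd' k ⟨hck, hdl⟩
  calc 4 = ({i, j, k, l} : Finset ι).card :=
        (Finset.card_eq_four.mpr ⟨i, j, k, l, hij, hik, hil, hjk, hjl, hkl, rfl⟩).symm
    _ ≤ Fintype.card ι := Finset.card_le_univ _

end Matrix

def pyramidGram : Matrix (Fin 4) (Fin 4) ℝ :=
  !![4, 0, 2, 2; 0, 4, 2, 2; 2, 2, 4, 0; 2, 2, 0, 4]

theorem pyramidVecs_dotProduct (i j : Fin 4) :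
    pyramidVecs i ⬝ᵥ pyramidVecs j = pyramidGram i j := by
  have h : Real.sqrt 2 * Real.sqrt 2 = 2 := Real.mul_self_sqrt zero_le_two
  fin_cases i <;> fin_cases j <;>
    simp [pyramidVecs, pyramidGram, dotProduct, Fin.sum_univ_three, h] <;> norm_num

theorem pyramid_nonneg_gram_but_not_embeddable :
    (∀ i j, 0 ≤ pyramidVecs i ⬝ᵥ pyramidVecs j) ∧
    ¬ ∃ Q ∈ Matrix.orthogonalGroup (Fin 3) ℝ, ∀ i, 0 ≤ Q.mulVec (pyramidVecs i) := by
  refine ⟨fun i j ↦ ?_, ?_⟩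
  · rw [pyramidVecs_dotProduct]
    fin_cases i <;> fin_cases j <;> simp [pyramidGram]
  · rintro ⟨Q, hQ, hpos⟩
    have gram (i j : Fin 4) : Q *ᵥ pyramidVecs i ⬝ᵥ Q *ᵥ pyramidVecs j = pyramidGram i j := by
      rw [mulVec_dotProduct_mulVec_of_mem_orthogonalGroup_s14 hQ, pyramidVecs_dotProduct]
    refine absurd (four_le_card_of_nonneg_of_dotProduct (hpos 0) (hpos 1) (hpos 2) (hpos 3)
      ?_ ?_ ?_ ?_ ?_ ?_) (by simp) <;> simp [gram, pyramidGram]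
end

section
/- Let φ₂(x) = (√6/4)(x²−1), φ₃(x) = (√10/4)·x·(x²−1), φ₄(x) = (√14/16)(5x²−1)(x²−1). Then for all x, y ∈ [−1, 1] one has φ₂(x)φ₂(y) + φ₃(x)φ₃(y) + φ₄(x)φ₄(y) ≥ 0. -/
/-!
Every φₖ (k ≥ 2) vanishes at ±1, so the sum factors as `(1 - x²)(1 - y²) q(x, y) / 256`
with `q = lobattoCofactor`, and the first two factors are nonnegative on the square. There
`x² + y² ≤ 1 + (xy)²`, which turns `q` into a quadratic in the single variable `xy`:
`q ≥ 40 ((1 + 2xy)² + 3(xy)²) ≥ 0`.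
-/

def lobattoCofactor (x y : ℝ) : ℝ :=
  110 + 160 * (x * y) + 350 * (x * y) ^ 2 - 70 * (x ^ 2 + y ^ 2)

theorem lobatto_inner_eq_mul_lobattoCofactor (x y : ℝ) :
    (Real.sqrt 6 / 4 * (x ^ 2 - 1)) * (Real.sqrt 6 / 4 * (y ^ 2 - 1)) +
        (Real.sqrt 10 / 4 * x * (x ^ 2 - 1)) * (Real.sqrt 10 / 4 * y * (y ^ 2 - 1)) +
        (Real.sqrt 14 / 16 * (5 * x ^ 2 - 1) * (x ^ 2 - 1)) *
          (Real.sqrt 14 / 16 * (5 * y ^ 2 - 1) * (y ^ 2 - 1)) =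
      (1 - x ^ 2) * (1 - y ^ 2) / 256 * lobattoCofactor x y := by
  have h6 : Real.sqrt 6 ^ 2 = 6 := Real.sq_sqrt (by norm_num)
  have h10 : Real.sqrt 10 ^ 2 = 10 := Real.sq_sqrt (by norm_num)
  have h14 : Real.sqrt 14 ^ 2 = 14 := Real.sq_sqrt (by norm_num)
  unfold lobattoCofactor
  linear_combination (x ^ 2 - 1) * (y ^ 2 - 1) / 16 * h6 +
    x * y * (x ^ 2 - 1) * (y ^ 2 - 1) / 16 * h10 +
    (5 * x ^ 2 - 1) * (5 * y ^ 2 - 1) * (x ^ 2 - 1) * (y ^ 2 - 1) / 256 * h14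

theorem lobattoCofactor_nonneg {x y : ℝ} (hx : x ^ 2 ≤ 1) (hy : y ^ 2 ≤ 1) :
    0 ≤ lobattoCofactor x y := by
  have h_sum_sq : x ^ 2 + y ^ 2 ≤ 1 + (x * y) ^ 2 := by
    nlinarith [mul_nonneg (sub_nonneg.2 hx) (sub_nonneg.2 hy)]
  calc 0 ≤ 40 * ((1 + 2 * (x * y)) ^ 2 + 3 * (x * y) ^ 2) := by positivity
    _ ≤ lobattoCofactor x y := by unfold lobattoCofactor; nlinarith

theorem lobatto_inner_products_nonneg :
    ∀ x ∈ Set.Icc (-1 : ℝ) 1, ∀ y ∈ Set.Icc (-1 : ℝ) 1,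
      0 ≤ (Real.sqrt 6 / 4 * (x ^ 2 - 1)) * (Real.sqrt 6 / 4 * (y ^ 2 - 1)) +
          (Real.sqrt 10 / 4 * x * (x ^ 2 - 1)) * (Real.sqrt 10 / 4 * y * (y ^ 2 - 1)) +
          (Real.sqrt 14 / 16 * (5 * x ^ 2 - 1) * (x ^ 2 - 1)) *
            (Real.sqrt 14 / 16 * (5 * y ^ 2 - 1) * (y ^ 2 - 1)) := by
  intro x hx y hy
  have hx2 : x ^ 2 ≤ 1 := sq_le_one_iff_abs_le_one x |>.2 (abs_le.2 hx)
  have hy2 : y ^ 2 ≤ 1 := sq_le_one_iff_abs_le_one y |>.2 (abs_le.2 hy)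
  rw [lobatto_inner_eq_mul_lobattoCofactor]
  have h_vanishing : 0 ≤ (1 - x ^ 2) * (1 - y ^ 2) / 256 :=
    div_nonneg (mul_nonneg (sub_nonneg.2 hx2) (sub_nonneg.2 hy2)) (by norm_num)
  exact mul_nonneg h_vanishing (lobattoCofactor_nonneg hx2 hy2)
end

section
/- For every two-dimensional linear subspace H of ℝ³ there exists a linear isometry f : H → ℝ² such that f maps H ∩ ℝ³≥0 into ℝ²≥0. -/
/-!
Any two vectors of the nonnegative octant make a non-obtuse angle, and isometries preserve this.
Identify `H` with `ℂ`. After a rotation taking one nonzero vector of the section to the positive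
real axis, the section lies in the right half-plane, where arguments make pairwise angles
`arg z - arg w` with no wrap-around. Those arguments then fit in an interval `[α, α + π / 2]`,
and rotating by `-α` puts the section in the first quadrant.
-/

open Real Set
open scoped InnerProductSpace ComplexConjugate

lemma exists_subset_Icc_of_sub_le {A : Set ℝ} {d : ℝ} (hA : ∀ a ∈ A, ∀ b ∈ A, a - b ≤ d) :
    ∃ α, A ⊆ Icc α (α + d) := by
  rcases A.eq_empty_or_nonempty with rfl | ⟨a₀, ha₀⟩
  · exact ⟨0, empty_subset _⟩
  have hbdd : BddBelow A := ⟨a₀ - d, fun b hb => by linarith [hA a₀ ha₀ b hb]⟩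
  refine ⟨sInf A, fun a ha => ⟨csInf_le hbdd ha, ?_⟩⟩
  have : a - d ≤ sInf A := le_csInf ⟨a₀, ha₀⟩ fun b hb => by linarith [hA a ha b hb]
  linarith

namespace Complex

lemma arg_sub_arg_le_pi_div_two {z w : ℂ} (hz : z ≠ 0) (hw : w ≠ 0) (hz_re : 0 ≤ z.re)
    (hw_re : 0 ≤ w.re) (hzw : 0 ≤ ⟪w, z⟫_ℝ) : arg z - arg w ≤ π / 2 := by
  have hz_arg := abs_le.1 (abs_arg_le_pi_div_two_iff.2 hz_re)
  have hw_arg := abs_le.1 (abs_arg_le_pi_div_two_iff.2 hw_re)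
  have h_conj : arg (conj w) = -arg w := by
    rw [arg_conj, if_neg (by linarith [pi_pos])]
  rcases le_or_gt (arg z - arg w) 0 with h_nonpos | h_pos
  · linarith [pi_pos]
  -- the difference now lies in `(0, π]`, so the argument of the product needs no reduction mod `2π`
  have h_mul : arg (z * conj w) = arg z - arg w := by
    rw [arg_mul hz (by simpa using hw) (by rw [h_conj]; constructor <;> linarith [pi_pos]),
      h_conj, sub_eq_add_neg]
  have := (abs_le.1 (abs_arg_le_pi_div_two_iff.2 (Complex.inner w z ▸ hzw))).2
  linarith

lemma circle_exp_neg_mul (α : ℝ) (z : ℂ) :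
    (Circle.exp (-α) : ℂ) * z = ‖z‖ * exp ((arg z - α : ℝ) * I) := by
  conv_lhs => rw [← norm_mul_exp_arg_mul_I z]
  rw [Circle.coe_exp, mul_left_comm, ← Complex.exp_add]
  push_cast
  ring_nf

lemma circle_exp_neg_arg_mul_self (z : ℂ) : (Circle.exp (-arg z) : ℂ) * z = ‖z‖ := by
  rw [circle_exp_neg_mul, sub_self]
  simp

lemma re_nonneg_and_im_nonneg_of_arg_mem_Icc {z : ℂ} {α : ℝ} (h : arg z ∈ Icc α (α + π / 2)) :
    0 ≤ (Circle.exp (-α) * z).re ∧ 0 ≤ (Circle.exp (-α) * z).im := by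
  rw [circle_exp_neg_mul, re_ofReal_mul, im_ofReal_mul, exp_ofReal_mul_I_re, exp_ofReal_mul_I_im]
  have h0 : 0 ≤ arg z - α := by linarith [h.1]
  have h1 : arg z - α ≤ π / 2 := by linarith [h.2]
  exact ⟨mul_nonneg (norm_nonneg z) (cos_nonneg_of_mem_Icc ⟨by linarith [pi_pos], h1⟩),
    mul_nonneg (norm_nonneg z) (sin_nonneg_of_nonneg_of_le_pi h0 (by linarith [pi_pos]))⟩

lemma exists_circle_mul_re_nonneg_and_im_nonneg_of_re_nonneg {C : Set ℂ}
    (hC_re : ∀ z ∈ C, 0 ≤ z.re) (hC : ∀ z ∈ C, ∀ w ∈ C, 0 ≤ ⟪w, z⟫_ℝ) :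
    ∃ u : Circle, ∀ z ∈ C, 0 ≤ (u * z).re ∧ 0 ≤ (u * z).im := by
  obtain ⟨α, hα⟩ := exists_subset_Icc_of_sub_le (A := arg '' (C \ {0})) (d := π / 2) <| by
    rintro _ ⟨z, ⟨hz, hz0⟩, rfl⟩ _ ⟨w, ⟨hw, hw0⟩, rfl⟩
    exact arg_sub_arg_le_pi_div_two hz0 hw0 (hC_re z hz) (hC_re w hw) (hC z hz w hw)
  refine ⟨Circle.exp (-α), fun z hz => ?_⟩
  rcases eq_or_ne z 0 with rfl | hz0
  · simp
  exact re_nonneg_and_im_nonneg_of_arg_mem_Icc (hα ⟨z, ⟨hz, hz0⟩, rfl⟩)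

lemma exists_circle_mul_re_nonneg_and_im_nonneg {C : Set ℂ}
    (hC : ∀ z ∈ C, ∀ w ∈ C, 0 ≤ ⟪w, z⟫_ℝ) :
    ∃ u : Circle, ∀ z ∈ C, 0 ≤ (u * z).re ∧ 0 ≤ (u * z).im := by
  by_cases hC0 : C ⊆ {0}
  · exact ⟨1, fun z hz => by simp [mem_singleton_iff.1 (hC0 hz)]⟩
  obtain ⟨z₀, hz₀, hz₀_ne⟩ := not_subset.1 hC0
  set v := Circle.exp (-arg z₀)
  have hvC : ∀ z ∈ rotation v '' C, ∀ w ∈ rotation v '' C, 0 ≤ ⟪w, z⟫_ℝ := by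
    rintro _ ⟨z, hz, rfl⟩ _ ⟨w, hw, rfl⟩
    rw [LinearIsometryEquiv.inner_map_map]
    exact hC z hz w hw
  have hvC_re : ∀ z ∈ rotation v '' C, 0 ≤ z.re := by
    rintro _ ⟨z, hz, rfl⟩
    have := hvC _ ⟨z, hz, rfl⟩ _ ⟨z₀, hz₀, rfl⟩
    rw [rotation_apply, rotation_apply, circle_exp_neg_arg_mul_self, Complex.inner, conj_ofReal,
      re_mul_ofReal] at this
    rw [rotation_apply]
    exact (mul_nonneg_iff_of_pos_right (norm_pos_iff.2 hz₀_ne)).1 this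
  obtain ⟨u, hu⟩ := exists_circle_mul_re_nonneg_and_im_nonneg_of_re_nonneg hvC_re hvC
  refine ⟨u * v, fun z hz => ?_⟩
  simpa [mul_assoc] using hu _ ⟨z, hz, rfl⟩

end Complex

lemma EuclideanSpace.inner_nonneg_of_nonneg {ι : Type*} [Fintype ι] {x y : EuclideanSpace ℝ ι}
    (hx : ∀ i, 0 ≤ x i) (hy : ∀ i, 0 ≤ y i) : 0 ≤ ⟪x, y⟫_ℝ := by
  rw [PiLp.inner_apply]
  exact Finset.sum_nonneg fun i _ => mul_nonneg (hy i) (hx i)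

theorem plane_section_of_octant_fits_in_quadrant
    (H : Submodule ℝ (EuclideanSpace ℝ (Fin 3))) (hH : Module.finrank ℝ H = 2) :
    ∃ f : H →ₗᵢ[ℝ] EuclideanSpace ℝ (Fin 2),
      ∀ x : H, (∀ i, 0 ≤ (x : EuclideanSpace ℝ (Fin 3)) i) → ∀ i, 0 ≤ f x i := by
  let e : H ≃ₗᵢ[ℝ] ℂ :=
    (stdOrthonormalBasis ℝ H).equiv Complex.orthonormalBasisOneI (finCongr hH)
  obtain ⟨u, hu⟩ := Complex.exists_circle_mul_re_nonneg_and_im_nonneg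
    (C := e '' {x : H | ∀ i, 0 ≤ (x : EuclideanSpace ℝ (Fin 3)) i}) <| by
      rintro _ ⟨x, hx, rfl⟩ _ ⟨y, hy, rfl⟩
      rw [LinearIsometryEquiv.inner_map_map, Submodule.coe_inner]
      exact EuclideanSpace.inner_nonneg_of_nonneg hy hx
  refine ⟨Complex.orthonormalBasisOneI.repr.toLinearIsometry.comp
    ((rotation u).toLinearIsometry.comp e.toLinearIsometry), fun x hx i => ?_⟩
  obtain ⟨hre, him⟩ := hu (e x) ⟨x, hx, rfl⟩
  fin_cases i
  · simpa [Complex.orthonormalBasisOneI_repr_apply] using hre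
  · simpa [Complex.orthonormalBasisOneI_repr_apply] using him
end

section
/- There exists a three-dimensional linear subspace H of ℝ⁴ — for instance the span of (√2, √2, 0, 0), (0, 0, √2, √2), (0, √2, √2, 0), (√2, 0, 0, √2) — such that no linear isometry f : H → ℝ³ maps H ∩ ℝ⁴≥0 into ℝ³≥0. -/
/-!
For nonnegative vectors the inner product vanishes exactly when their supports are disjoint, and
a linear isometry preserves inner products. In `H` the nonnegative vectors `v₁ ⊥ v₂` and `v₃ ⊥ v₄`
have `⟪vᵢ, vⱼ⟫ = 2` for `i ∈ {1, 2}`, `j ∈ {3, 4}`. Their images in a nonnegative octant would have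
supports `S₁, S₂` disjoint, `S₃, S₄` disjoint, and each of `S₁, S₂` meeting each of `S₃, S₄`; one
point from each of these four intersections gives four distinct coordinates, but there are only three.
-/

open scoped InnerProductSpace
open Function

theorem four_le_card_of_disjoint_of_inter_nonempty {ι : Type*} [Fintype ι] {A B C D : Set ι}
    (hAB : Disjoint A B) (hCD : Disjoint C D) (hAC : (A ∩ C).Nonempty) (hBC : (B ∩ C).Nonempty)
    (hAD : (A ∩ D).Nonempty) (hBD : (B ∩ D).Nonempty) : 4 ≤ Fintype.card ι := by
  obtain ⟨i, hiA, hiC⟩ := hAC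
  obtain ⟨j, hjB, hjC⟩ := hBC
  obtain ⟨k, hkA, hkD⟩ := hAD
  obtain ⟨l, hlB, hlD⟩ := hBD
  have hnodup : [i, j, k, l].Nodup := by
    simp [hAB.ne_of_mem hiA hjB, hAB.ne_of_mem hkA hlB, hCD.ne_of_mem hiC hkD,
      hCD.ne_of_mem hiC hlD, hCD.ne_of_mem hjC hkD, hCD.ne_of_mem hjC hlD]
  exact hnodup.length_le_card

namespace EuclideanSpace

variable {ι : Type*} [Fintype ι]

theorem real_inner_eq_zero_iff_disjoint_support {x y : EuclideanSpace ℝ ι}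
    (hx : ∀ i, 0 ≤ x i) (hy : ∀ i, 0 ≤ y i) :
    ⟪x, y⟫_ℝ = 0 ↔ Disjoint (support x) (support y) := by
  simp only [PiLp.inner_apply, Real.inner_apply]
  rw [Finset.sum_eq_zero_iff_of_nonneg fun i _ => mul_nonneg (hx i) (hy i)]
  simp [Set.disjoint_left, or_iff_not_imp_left]

theorem four_le_card_of_nonneg_of_real_inner {a b c d : EuclideanSpace ℝ ι}
    (ha : ∀ i, 0 ≤ a i) (hb : ∀ i, 0 ≤ b i) (hc : ∀ i, 0 ≤ c i) (hd : ∀ i, 0 ≤ d i)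
    (hab : ⟪a, b⟫_ℝ = 0) (hcd : ⟪c, d⟫_ℝ = 0) (hac : ⟪a, c⟫_ℝ ≠ 0) (hbc : ⟪b, c⟫_ℝ ≠ 0)
    (had : ⟪a, d⟫_ℝ ≠ 0) (hbd : ⟪b, d⟫_ℝ ≠ 0) : 4 ≤ Fintype.card ι := by
  have meet {x y : EuclideanSpace ℝ ι} (hx : ∀ i, 0 ≤ x i) (hy : ∀ i, 0 ≤ y i)
      (h : ⟪x, y⟫_ℝ ≠ 0) : (support x ∩ support y).Nonempty :=
    Set.not_disjoint_iff_nonempty_inter.1 (mt (real_inner_eq_zero_iff_disjoint_support hx hy).2 h)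
  exact four_le_card_of_disjoint_of_inter_nonempty
    ((real_inner_eq_zero_iff_disjoint_support ha hb).1 hab)
    ((real_inner_eq_zero_iff_disjoint_support hc hd).1 hcd)
    (meet ha hc hac) (meet hb hc hbc) (meet ha hd had) (meet hb hd hbd)

end EuclideanSpace

namespace LinearIsometry

variable {ι κ : Type*} [Fintype ι] [Fintype κ] {H : Submodule ℝ (EuclideanSpace ℝ ι)}

theorem four_le_card_of_map_nonneg (f : H →ₗᵢ[ℝ] EuclideanSpace ℝ κ)
    (hf : ∀ x : H, (∀ i, 0 ≤ (x : EuclideanSpace ℝ ι) i) → ∀ i, 0 ≤ f x i) {a b c d : H}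
    (ha : ∀ i, 0 ≤ (a : EuclideanSpace ℝ ι) i) (hb : ∀ i, 0 ≤ (b : EuclideanSpace ℝ ι) i)
    (hc : ∀ i, 0 ≤ (c : EuclideanSpace ℝ ι) i) (hd : ∀ i, 0 ≤ (d : EuclideanSpace ℝ ι) i)
    (hab : ⟪a, b⟫_ℝ = 0) (hcd : ⟪c, d⟫_ℝ = 0) (hac : ⟪a, c⟫_ℝ ≠ 0) (hbc : ⟪b, c⟫_ℝ ≠ 0)
    (had : ⟪a, d⟫_ℝ ≠ 0) (hbd : ⟪b, d⟫_ℝ ≠ 0) : 4 ≤ Fintype.card κ := by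
  simp only [← f.inner_map_map] at hab hcd hac hbc had hbd
  exact EuclideanSpace.four_le_card_of_nonneg_of_real_inner (hf a ha) (hf b hb) (hf c hc) (hf d hd)
    hab hcd hac hbc had hbd

end LinearIsometry

namespace OrthantSection

noncomputable def v₁ : EuclideanSpace ℝ (Fin 4) :=
  (WithLp.equiv 2 (Fin 4 → ℝ)).symm ![Real.sqrt 2, Real.sqrt 2, 0, 0]
noncomputable def v₂ : EuclideanSpace ℝ (Fin 4) :=
  (WithLp.equiv 2 (Fin 4 → ℝ)).symm ![0, 0, Real.sqrt 2, Real.sqrt 2]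
noncomputable def v₃ : EuclideanSpace ℝ (Fin 4) :=
  (WithLp.equiv 2 (Fin 4 → ℝ)).symm ![0, Real.sqrt 2, Real.sqrt 2, 0]
noncomputable def v₄ : EuclideanSpace ℝ (Fin 4) :=
  (WithLp.equiv 2 (Fin 4 → ℝ)).symm ![Real.sqrt 2, 0, 0, Real.sqrt 2]

theorem v₁_nonneg : ∀ i, 0 ≤ v₁ i := by intro i; fin_cases i <;> simp [v₁]
theorem v₂_nonneg : ∀ i, 0 ≤ v₂ i := by intro i; fin_cases i <;> simp [v₂]
theorem v₃_nonneg : ∀ i, 0 ≤ v₃ i := by intro i; fin_cases i <;> simp [v₃]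
theorem v₄_nonneg : ∀ i, 0 ≤ v₄ i := by intro i; fin_cases i <;> simp [v₄]

theorem inner_v₁_v₂ : ⟪v₁, v₂⟫_ℝ = 0 := by simp [v₁, v₂, PiLp.inner_apply, Fin.sum_univ_four]
theorem inner_v₃_v₄ : ⟪v₃, v₄⟫_ℝ = 0 := by simp [v₃, v₄, PiLp.inner_apply, Fin.sum_univ_four]
theorem inner_v₁_v₃ : ⟪v₁, v₃⟫_ℝ = 2 := by simp [v₁, v₃, PiLp.inner_apply, Fin.sum_univ_four]
theorem inner_v₂_v₃ : ⟪v₂, v₃⟫_ℝ = 2 := by simp [v₂, v₃, PiLp.inner_apply, Fin.sum_univ_four]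
theorem inner_v₁_v₄ : ⟪v₁, v₄⟫_ℝ = 2 := by simp [v₁, v₄, PiLp.inner_apply, Fin.sum_univ_four]
theorem inner_v₂_v₄ : ⟪v₂, v₄⟫_ℝ = 2 := by simp [v₂, v₄, PiLp.inner_apply, Fin.sum_univ_four]

theorem v₄_eq : v₄ = v₁ + v₂ - v₃ := by
  ext i; fin_cases i <;> simp [v₁, v₂, v₃, v₄]

theorem linearIndependent_v₁_v₂_v₃ : LinearIndependent ℝ ![v₁, v₂, v₃] := by
  rw [Fintype.linearIndependent_iff]
  intro g hg
  have hcoord (j : Fin 4) : g 0 * v₁ j + g 1 * v₂ j + g 2 * v₃ j = 0 := by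
    simpa [Fin.sum_univ_three] using congrArg (· j) hg
  have h₀ : g 0 = 0 := by simpa [v₁, v₂, v₃] using hcoord 0
  have h₁ : g 1 = 0 := by simpa [v₁, v₂, v₃] using hcoord 3
  have h₂ : g 2 = 0 := by simpa [v₁, v₂, v₃, h₁] using hcoord 2
  intro k; fin_cases k <;> assumption

theorem finrank_span : Module.finrank ℝ (Submodule.span ℝ {v₁, v₂, v₃, v₄}) = 3 := by
  have hv₄ : v₄ ∈ Submodule.span ℝ {v₁, v₂, v₃} := by
    rw [v₄_eq]
    exact sub_mem (add_mem (Submodule.subset_span (by simp)) (Submodule.subset_span (by simp)))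
      (Submodule.subset_span (by simp))
  have hspan : Submodule.span ℝ {v₁, v₂, v₃, v₄} = Submodule.span ℝ (Set.range ![v₁, v₂, v₃]) := by
    rw [Matrix.range_cons, Matrix.range_cons_cons_empty, Set.singleton_union,
      ← Submodule.span_insert_eq_span hv₄]
    congr 1
    ext; simp only [Set.mem_insert_iff, Set.mem_singleton_iff]; tauto
  rw [hspan, finrank_span_eq_card linearIndependent_v₁_v₂_v₃, Fintype.card_fin]

end OrthantSection

open OrthantSection in
theorem hyperplane_section_of_R4_orthant_need_not_fit_in_octant :
    ∃ H : Submodule ℝ (EuclideanSpace ℝ (Fin 4)),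
      Module.finrank ℝ H = 3 ∧
      H = Submodule.span ℝ
        {(WithLp.equiv 2 (Fin 4 → ℝ)).symm ![Real.sqrt 2, Real.sqrt 2, 0, 0],
         (WithLp.equiv 2 (Fin 4 → ℝ)).symm ![0, 0, Real.sqrt 2, Real.sqrt 2],
         (WithLp.equiv 2 (Fin 4 → ℝ)).symm ![0, Real.sqrt 2, Real.sqrt 2, 0],
         (WithLp.equiv 2 (Fin 4 → ℝ)).symm ![Real.sqrt 2, 0, 0, Real.sqrt 2]} ∧
      ¬ ∃ f : H →ₗᵢ[ℝ] EuclideanSpace ℝ (Fin 3),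
        ∀ x : H, (∀ i, 0 ≤ (x : EuclideanSpace ℝ (Fin 4)) i) → ∀ i, 0 ≤ f x i := by
  refine ⟨Submodule.span ℝ {v₁, v₂, v₃, v₄}, finrank_span, rfl, fun ⟨f, hf⟩ => ?_⟩
  have mem {v} (hv : v ∈ ({v₁, v₂, v₃, v₄} : Set _)) : v ∈ Submodule.span ℝ {v₁, v₂, v₃, v₄} :=
    Submodule.subset_span hv
  have := f.four_le_card_of_map_nonneg hf (a := ⟨v₁, mem (by simp)⟩) (b := ⟨v₂, mem (by simp)⟩)
    (c := ⟨v₃, mem (by simp)⟩) (d := ⟨v₄, mem (by simp)⟩) v₁_nonneg v₂_nonneg v₃_nonneg v₄_nonneg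
    inner_v₁_v₂ inner_v₃_v₄ (by simp [inner_v₁_v₃]) (by simp [inner_v₂_v₃])
    (by simp [inner_v₁_v₄]) (by simp [inner_v₂_v₄])
  simp at this
end

section
/- Let T ⊆ ℝ² be the closed equilateral triangle with vertices (0,0), (√2, 0), (√2/2, √6/2) (side length √2). Then T contains no square of side length √2/2: there do not exist points p, q, r, s ∈ T with ‖p−q‖ = ‖q−r‖ = ‖r−s‖ = ‖s−p‖ = √2/2 and ‖p−r‖ = ‖q−s‖ = 1. -/
/-!
Four points with the side and diagonal lengths of a square form a parallelogram
`p, p + u, p + u + v, p + v` with `v ⟂ u` and `‖v‖ = ‖u‖` (Euler's quadrilateral identity).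
The outward normals `nᵢ` of the sides of an equilateral triangle of height `H`, taken of unit
length, sum to zero. Adding the three side inequalities, each at the vertex of the square that
is furthest in the direction `nᵢ`, therefore eliminates `p` and gives
`∑ᵢ (|⟪nᵢ, u⟫| + |⟪nᵢ, v⟫|) ≤ 2H`. The six functionals involved are `u ↦ ⟪m, u⟫` for unit
vectors `m` spaced by 30° modulo 180°, so the left side is at least `(2 + √3)‖u‖`. A square in a
triangle of side `L` thus has side at most `2H / (2 + √3) = (2√3 - 3) L < L / 2`.
-/

open Real RealInnerProductSpace

section InnerProductSpace

variable {E : Type*} [NormedAddCommGroup E] [InnerProductSpace ℝ E]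

theorem norm_add_sub_add_sq (p q r s : E) :
    ‖p + r - (q + s)‖ ^ 2 = ‖p - q‖ ^ 2 + ‖q - r‖ ^ 2 + ‖r - s‖ ^ 2 + ‖s - p‖ ^ 2
      - ‖p - r‖ ^ 2 - ‖q - s‖ ^ 2 := by
  have h₁ : p + r - (q + s) = (p - q) + (r - s) := by abel
  have h₂ : s - p = -((p - q) + (q - r) + (r - s)) := by abel
  have h₃ : p - r = (p - q) + (q - r) := by abel
  have h₄ : q - s = (q - r) + (r - s) := by abel
  rw [h₁, h₂, h₃, h₄, norm_neg]
  simp only [norm_add_sq_real, inner_add_left]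
  ring

theorem add_eq_add_of_sum_sq_sides_eq {p q r s : E}
    (h : ‖p - q‖ ^ 2 + ‖q - r‖ ^ 2 + ‖r - s‖ ^ 2 + ‖s - p‖ ^ 2 = ‖p - r‖ ^ 2 + ‖q - s‖ ^ 2) :
    p + r = q + s := by
  have h0 : ‖p + r - (q + s)‖ ^ 2 = 0 := by rw [norm_add_sub_add_sq]; linarith
  simpa [sub_eq_zero] using h0

end InnerProductSpace

theorem posPart_add_posPart_le {t a b c : ℝ} (h₀ : t ≤ c) (ha : t + a ≤ c) (hb : t + b ≤ c)
    (hab : t + a + b ≤ c) : t + a⁺ + b⁺ ≤ c := by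
  rcases le_total a 0 with ha' | ha' <;> rcases le_total b 0 with hb' | hb' <;>
    simp only [posPart_eq_zero.2, posPart_eq_self.2, *] <;> linarith

theorem sum_abs_le_of_parallelogram_subset {ι E : Type*} [Fintype ι] [AddCommGroup E]
    [Module ℝ E] (ℓ : ι → Module.Dual ℝ E) (c : ι → ℝ) (hℓ : ∑ i, ℓ i = 0) {p u v : E}
    (h : ({p, p + u, p + v, p + u + v} : Set E) ⊆ {z | ∀ i, ℓ i z ≤ c i}) :
    ∑ i, (|ℓ i u| + |ℓ i v|) ≤ 2 * ∑ i, c i := by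
  have hmax : ∀ i, ℓ i p + (ℓ i u)⁺ + (ℓ i v)⁺ ≤ c i := fun i => by
    have hz : ∀ z ∈ ({p, p + u, p + v, p + u + v} : Set E), ℓ i z ≤ c i := fun z hz => h hz i
    simp only [Set.mem_insert_iff, Set.mem_singleton_iff, forall_eq_or_imp, forall_eq,
      map_add] at hz
    exact posPart_add_posPart_le hz.1 hz.2.1 hz.2.2.1 hz.2.2.2
  have hzero : ∀ x, ∑ i, ℓ i x = 0 := fun x => by
    rw [← LinearMap.sum_apply, hℓ, LinearMap.zero_apply]
  have habs : ∀ t : ℝ, |t| = 2 * t⁺ - t := fun t => by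
    have := add_abs_eq_two_nsmul_posPart t
    rw [two_nsmul] at this
    linarith
  calc ∑ i, (|ℓ i u| + |ℓ i v|)
      = 2 * ∑ i, (ℓ i p + (ℓ i u)⁺ + (ℓ i v)⁺) := by
        simp only [habs, Finset.sum_add_distrib, Finset.sum_sub_distrib, ← Finset.mul_sum,
          hzero]
        ring
    _ ≤ 2 * ∑ i, c i := by gcongr with i; exact hmax i

theorem abs_eq_abs_of_mul_add_mul_eq_zero {a b c d : ℝ} (h : a * c + b * d = 0)
    (hn : c ^ 2 + d ^ 2 = a ^ 2 + b ^ 2) : |c| = |b| ∧ |d| = |a| := by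
  have key : (a ^ 2 + b ^ 2) * (c ^ 2 - b ^ 2) = 0 := by
    linear_combination (a * c - b * d) * h + b ^ 2 * hn
  have hcb : c ^ 2 = b ^ 2 := by
    rcases mul_eq_zero.1 key with h0 | h0
    · nlinarith [sq_nonneg a, sq_nonneg b, sq_nonneg c, sq_nonneg d]
    · linarith
  exact ⟨sq_eq_sq_iff_abs_eq_abs _ _ |>.1 hcb, sq_eq_sq_iff_abs_eq_abs _ _ |>.1 (by linarith)⟩

theorem two_add_sqrt_three_mul_le {x y ρ : ℝ} (hx : 0 ≤ x) (hy : 0 ≤ y) (hρ : 0 ≤ ρ)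
    (h : x ^ 2 + y ^ 2 = ρ ^ 2) :
    (2 + √3) * ρ ≤ x + y + max (√3 * x) y + max (√3 * y) x := by
  wlog hyx : y ≤ x generalizing x y
  · have := this hy hx (by linarith) (le_of_not_ge hyx)
    linarith
  have h3 : √3 ^ 2 = 3 := sq_sqrt (by norm_num)
  have h3pos : 1 ≤ √3 := by rw [one_le_sqrt]; norm_num
  rw [max_eq_left (by nlinarith : y ≤ √3 * x)]
  refine (pow_le_pow_iff_left₀ (by positivity) (by positivity) two_ne_zero).1 ?_
  rcases le_total (√3 * y) x with hxy | hxy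
  · have key :
        (x + y + √3 * x + x) ^ 2 - ((2 + √3) * ρ) ^ 2 = 2 * (2 + √3) * y * (x - √3 * y) := by
      linear_combination y ^ 2 * h3 + (2 + √3) ^ 2 * h
    rw [max_eq_right hxy]
    nlinarith [mul_nonneg hy (sub_nonneg.2 hxy)]
  · have key : (x + y + √3 * x + √3 * y) ^ 2 - ((2 + √3) * ρ) ^ 2
        = (2 + √3) * ((√3 * y - x) * (√3 * x - y)) := by
      linear_combination (x ^ 2 + y ^ 2 - √3 * x * y) * h3 + (2 + √3) ^ 2 * h
    rw [max_eq_left hxy]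
    nlinarith [mul_nonneg (sub_nonneg.2 hxy) (sub_nonneg.2 (by nlinarith : y ≤ √3 * x))]

theorem abs_sub_add_abs_add (a b : ℝ) : |a - b| + |a + b| = 2 * max |a| |b| := by
  rcases abs_cases a with ⟨ha, _⟩ | ⟨ha, _⟩ <;> rcases abs_cases b with ⟨hb, _⟩ | ⟨hb, _⟩ <;>
    rcases abs_cases (a - b) with ⟨h₁, _⟩ | ⟨h₁, _⟩ <;>
    rcases abs_cases (a + b) with ⟨h₂, _⟩ | ⟨h₂, _⟩ <;>
    rw [ha, hb, h₁, h₂] <;>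
    first
    | (rw [max_eq_left (by linarith)]; linarith)
    | (rw [max_eq_right (by linarith)]; linarith)

-- The normals are scaled to length `2` to keep the coordinates free of fractions.
noncomputable def sideForm (i : Fin 3) : Module.Dual ℝ (EuclideanSpace ℝ (Fin 2)) :=
  innerₛₗ ℝ (![!₂[0, -2], !₂[-√3, 1], !₂[√3, 1]] i)

noncomputable def sideBound : Fin 3 → ℝ := ![0, 0, √6]

theorem sideForm_apply (z : EuclideanSpace ℝ (Fin 2)) :
    sideForm 0 z = -2 * z 1 ∧ sideForm 1 z = -√3 * z 0 + z 1 ∧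
      sideForm 2 z = √3 * z 0 + z 1 := by
  simp [sideForm, innerₛₗ_apply_apply, PiLp.inner_apply, Fin.sum_univ_two, mul_comm]

theorem sum_sideForm : ∑ i, sideForm i = 0 := by
  ext z
  obtain ⟨h0, h1, h2⟩ := sideForm_apply z
  simp only [Fin.sum_univ_three, LinearMap.add_apply, h0, h1, h2, LinearMap.zero_apply]
  ring

theorem sum_abs_sideForm (z : EuclideanSpace ℝ (Fin 2)) :
    ∑ i, |sideForm i z| = 2 * (|z 1| + max (√3 * |z 0|) |z 1|) := by
  obtain ⟨h0, h1, h2⟩ := sideForm_apply z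
  have h := abs_sub_add_abs_add (√3 * z 0) (z 1)
  rw [abs_mul, abs_of_pos (by positivity : (0 : ℝ) < √3)] at h
  rw [Fin.sum_univ_three, h0, h1, h2, abs_mul, show -√3 * z 0 + z 1 = -(√3 * z 0 - z 1) by ring,
    abs_neg, abs_neg, abs_two]
  linarith

theorem convexHull_subset_sideForm_le :
    convexHull ℝ
        {(WithLp.equiv 2 (Fin 2 → ℝ)).symm ![0, 0],
         (WithLp.equiv 2 (Fin 2 → ℝ)).symm ![√2, 0],
         (WithLp.equiv 2 (Fin 2 → ℝ)).symm ![√2 / 2, √6 / 2]} ⊆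
      {z | ∀ i, sideForm i z ≤ sideBound i} := by
  have h6 : √6 = √2 * √3 := by rw [← sqrt_mul (by norm_num)]; norm_num
  refine convexHull_min ?_ ?_
  · rintro z (rfl | rfl | rfl) i <;> fin_cases i <;>
      simp [sideForm, sideBound, innerₛₗ_apply_apply, PiLp.inner_apply, Fin.sum_univ_two, h6] <;>
      linarith
  · simp only [Set.ofPred_forall]
    exact convex_iInter fun i => convex_halfSpace_le (sideForm i).isLinear _

theorem le_sum_abs_sideForm_of_inner_eq_zero {u v : EuclideanSpace ℝ (Fin 2)}
    (huv : ⟪u, v⟫ = 0) (hvu : ‖v‖ = ‖u‖) :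
    2 * ((2 + √3) * ‖u‖) ≤ ∑ i, (|sideForm i u| + |sideForm i v|) := by
  have hnorm : ∑ i, v i ^ 2 = ∑ i, u i ^ 2 := by
    rw [← EuclideanSpace.real_norm_sq_eq, ← EuclideanSpace.real_norm_sq_eq, hvu]
  rw [Fin.sum_univ_two, Fin.sum_univ_two] at hnorm
  have hinner : u 0 * v 0 + u 1 * v 1 = 0 := by
    simpa [PiLp.inner_apply, Fin.sum_univ_two, mul_comm] using huv
  obtain ⟨h0, h1⟩ := abs_eq_abs_of_mul_add_mul_eq_zero hinner hnorm
  have hu : |u 0| ^ 2 + |u 1| ^ 2 = ‖u‖ ^ 2 := by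
    simp [EuclideanSpace.real_norm_sq_eq, Fin.sum_univ_two]
  have := two_add_sqrt_three_mul_le (abs_nonneg _) (abs_nonneg _) (norm_nonneg _) hu
  rw [Finset.sum_add_distrib, sum_abs_sideForm, sum_abs_sideForm, h0, h1]
  linarith

theorem no_square_in_equilateral_triangle :
    let T : Set (EuclideanSpace ℝ (Fin 2)) :=
      convexHull ℝ
        {(WithLp.equiv 2 (Fin 2 → ℝ)).symm ![0, 0],
         (WithLp.equiv 2 (Fin 2 → ℝ)).symm ![Real.sqrt 2, 0],
         (WithLp.equiv 2 (Fin 2 → ℝ)).symm ![Real.sqrt 2 / 2, Real.sqrt 6 / 2]}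
    ¬ ∃ p ∈ T, ∃ q ∈ T, ∃ r ∈ T, ∃ s ∈ T,
        ‖p - q‖ = Real.sqrt 2 / 2 ∧ ‖q - r‖ = Real.sqrt 2 / 2 ∧
        ‖r - s‖ = Real.sqrt 2 / 2 ∧ ‖s - p‖ = Real.sqrt 2 / 2 ∧
        ‖p - r‖ = 1 ∧ ‖q - s‖ = 1 := by
  rintro T ⟨p, hp, q, hq, r, hr, s, hs, hpq, hqr, hrs, hsp, hpr, hqs⟩
  have h2 : √2 ^ 2 = 2 := sq_sqrt (by norm_num)
  have hr' : q + (s - p) = r := by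
    have := add_eq_add_of_sum_sq_sides_eq (p := p) (q := q) (r := r) (s := s)
      (by rw [hpq, hqr, hrs, hsp, hpr, hqs]; nlinarith)
    rw [← add_sub_assoc, ← this, add_sub_cancel_left]
  have horth : ⟪q - p, s - p⟫ = 0 := by
    rw [← norm_sub_sq_eq_norm_sq_add_norm_sq_iff_real_inner_eq_zero, sub_sub_sub_cancel_right,
      hqs, norm_sub_rev, hpq, hsp]
    nlinarith
  have hupper := sum_abs_le_of_parallelogram_subset sideForm sideBound sum_sideForm
    (p := p) (u := q - p) (v := s - p) (by
      rw [add_sub_cancel, add_sub_cancel, hr']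
      rintro z (rfl | rfl | rfl | rfl) <;> exact convexHull_subset_sideForm_le ‹_›)
  have hlower := le_sum_abs_sideForm_of_inner_eq_zero horth (by rw [hsp, norm_sub_rev, hpq])
  rw [norm_sub_rev, hpq] at hlower
  have h6 : √6 = √2 * √3 := by rw [← sqrt_mul (by norm_num)]; norm_num
  have h3 : √3 < 2 := by rw [sqrt_lt' (by norm_num)]; norm_num
  have hbound : ∑ i, sideBound i = √6 := by simp [sideBound, Fin.sum_univ_three]
  rw [hbound] at hupper
  nlinarith [sqrt_pos.2 (show (0:ℝ) < 2 by norm_num)]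
end
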